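/- arXiv:math/0508191 — 10 statements merged into one kernel-verified Lean document; each statement's English description precedes it below -/
import Mathlib

section
/- Let Γ be a totally ordered abelian group. The following are equivalent: (a) there exists an injective order-preserving group homomorphism from Γ to the additive group ℝ with its usual order; (b) Γ has at most one isolated subgroup, i.e., rank(Γ) ≤ 1; (c) Γ is archimedean: for all a, b ∈ Γ with b > 0 there exists a positive integer n such that a ≤ n·b. -/
set_option linter.unusedSectionVars false
set_option linter.unusedVariables false

section Holder

variable {Γ : Type*} [AddCommGroup Γ] [LinearOrder Γ] [IsOrderedAddMonoid Γ] (b : Γ)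

/-- Lower rational cut of `a` relative to `b`. -/
def Lq (a : Γ) : Set ℚ := {q : ℚ | q.num • b ≤ (q.den : ℤ) • a}

/-- Upper rational cut. -/
def Uq (a : Γ) : Set ℚ := {q : ℚ | (q.den : ℤ) • a ≤ q.num • b}

/-- The Hölder embedding. -/
noncomputable def holderF (a : Γ) : ℝ := sSup ((fun q : ℚ => (q : ℝ)) '' Lq b a)

variable {b}

lemma mem_Lq_iff {a : Γ} {q : ℚ} {m n : ℤ} (hn : 0 < n)
    (hq : q = (m : ℚ) / (n : ℚ)) : q ∈ Lq b a ↔ m • b ≤ n • a := by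
  have hden : (0:ℤ) < (q.den : ℤ) := by exact_mod_cast q.pos
  have key : q.num * n = m * q.den := by
    have h1 : (q.num : ℚ) / (q.den : ℚ) = (m : ℚ) / (n : ℚ) := by
      rw [Rat.num_div_den]; exact hq
    have hd : ((q.den : ℚ) : ℚ) ≠ 0 := by exact_mod_cast q.den_nz
    have hn' : ((n : ℚ)) ≠ 0 := by exact_mod_cast hn.ne'
    field_simp at h1
    rw [mul_comm m]
    exact_mod_cast h1
  constructor
  · intro h
    have h2 : (n * q.num) • b ≤ (n * (q.den:ℤ)) • a := by
      rw [mul_zsmul, mul_zsmul]; exact zsmul_le_zsmul_right hn.le h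
    rw [mul_comm n q.num, key, mul_comm n (q.den:ℤ), mul_comm m (q.den:ℤ),
      mul_zsmul, mul_zsmul] at h2
    exact (zsmul_le_zsmul_iff_right hden).mp h2
  · intro h
    have h2 : ((q.den:ℤ) * m) • b ≤ ((q.den:ℤ) * n) • a := by
      rw [mul_zsmul, mul_zsmul]; exact zsmul_le_zsmul_right hden.le h
    rw [← mul_comm m (q.den:ℤ), ← key, mul_comm q.num n, mul_comm (q.den:ℤ) n,
      mul_zsmul, mul_zsmul] at h2
    exact (zsmul_le_zsmul_iff_right hn).mp h2

lemma neg_mem_Lq_neg_iff {a : Γ} {q : ℚ} : -q ∈ Lq b (-a) ↔ q ∈ Uq b a := by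
  simp only [Lq, Uq, Set.mem_setOf_eq, Rat.num_neg_eq_neg_num, Rat.den_neg_eq_den,
    neg_zsmul, smul_neg]
  constructor
  · intro h; rw [← neg_le_neg_iff]; exact h
  · intro h; exact neg_le_neg h

lemma mem_Uq_iff {a : Γ} {q : ℚ} {m n : ℤ} (hn : 0 < n)
    (hq : q = (m : ℚ) / (n : ℚ)) : q ∈ Uq b a ↔ n • a ≤ m • b := by
  rw [← neg_mem_Lq_neg_iff,
    mem_Lq_iff (m := -m) (n := n) hn (by rw [hq]; push_cast; ring)]
  rw [neg_zsmul, smul_neg, neg_le_neg_iff]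

lemma Lq_le_Uq (hb : 0 < b) {a : Γ} {p q : ℚ} (hp : p ∈ Lq b a) (hq : q ∈ Uq b a) :
    p ≤ q := by
  have hpd : (0:ℤ) < (p.den : ℤ) := by exact_mod_cast p.pos
  have hqd : (0:ℤ) < (q.den : ℤ) := by exact_mod_cast q.pos
  have h1 : ((q.den:ℤ) * p.num) • b ≤ ((q.den:ℤ) * (p.den:ℤ)) • a := by
    rw [mul_zsmul, mul_zsmul]; exact zsmul_le_zsmul_right hqd.le hp
  have h2 : ((p.den:ℤ) * (q.den:ℤ)) • a ≤ ((p.den:ℤ) * q.num) • b := by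
    rw [mul_zsmul, mul_zsmul]; exact zsmul_le_zsmul_right hpd.le hq
  rw [mul_comm (q.den:ℤ) (p.den:ℤ)] at h1
  have h4 : (q.den:ℤ) * p.num ≤ (p.den:ℤ) * q.num :=
    (zsmul_le_zsmul_iff_left hb).mp (h1.trans h2)
  have h5 : (p.num:ℚ)/(p.den:ℚ) ≤ (q.num:ℚ)/(q.den:ℚ) := by
    rw [div_le_div_iff₀ (by exact_mod_cast p.pos) (by exact_mod_cast q.pos)]
    have : p.num * (q.den:ℤ) ≤ q.num * (p.den:ℤ) := by linarith
    exact_mod_cast this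
  rwa [Rat.num_div_den, Rat.num_div_den] at h5

variable [Archimedean Γ]

lemma Lq_nonempty (hb : 0 < b) (a : Γ) : (Lq b a).Nonempty := by
  obtain ⟨n, hn⟩ := Archimedean.arch (-a) hb
  refine ⟨((-(n:ℤ) : ℤ) : ℚ), ?_⟩
  rw [mem_Lq_iff (m := -(n:ℤ)) (n := 1) one_pos (by push_cast; ring)]
  rw [one_zsmul, neg_zsmul, neg_le]
  exact hn.trans_eq (natCast_zsmul b n).symm

lemma Uq_nonempty (hb : 0 < b) (a : Γ) : (Uq b a).Nonempty := by
  obtain ⟨n, hn⟩ := Archimedean.arch a hb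
  refine ⟨(((n:ℤ) : ℤ) : ℚ), ?_⟩
  rw [mem_Uq_iff (m := (n:ℤ)) (n := 1) one_pos (by push_cast; ring), one_zsmul]
  exact hn.trans_eq (natCast_zsmul b n).symm

lemma Lq_union_Uq (a : Γ) (q : ℚ) : q ∈ Lq b a ∨ q ∈ Uq b a := le_total _ _

lemma Lq_bddAbove (hb : 0 < b) (a : Γ) :
    BddAbove ((fun q : ℚ => (q : ℝ)) '' Lq b a) := by
  obtain ⟨N, hN⟩ := Uq_nonempty hb a
  refine ⟨(N : ℝ), ?_⟩
  rintro x ⟨q, hq, rfl⟩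
  show (q:ℝ) ≤ (N:ℝ)
  exact_mod_cast Lq_le_Uq hb hq hN

lemma Uq_bddBelow (hb : 0 < b) (a : Γ) :
    BddBelow ((fun q : ℚ => (q : ℝ)) '' Uq b a) := by
  obtain ⟨N, hN⟩ := Lq_nonempty hb a
  refine ⟨(N : ℝ), ?_⟩
  rintro x ⟨q, hq, rfl⟩
  show (N:ℝ) ≤ (q:ℝ)
  exact_mod_cast Lq_le_Uq hb hN hq

lemma holderF_eq_sInf (hb : 0 < b) (a : Γ) :
    holderF b a = sInf ((fun q : ℚ => (q : ℝ)) '' Uq b a) := by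
  apply le_antisymm
  · apply csSup_le ((Lq_nonempty hb a).image _)
    rintro x ⟨p, hp, rfl⟩
    apply le_csInf ((Uq_nonempty hb a).image _)
    rintro y ⟨q, hq, rfl⟩
    show (p:ℝ) ≤ (q:ℝ)
    exact_mod_cast Lq_le_Uq hb hp hq
  · by_contra hlt
    push_neg at hlt
    obtain ⟨q, hq1, hq2⟩ := exists_rat_btwn hlt
    rcases Lq_union_Uq (b := b) a q with h | h
    · exact absurd (show (q:ℝ) ≤ holderF b a from le_csSup (Lq_bddAbove hb a) ⟨q, h, rfl⟩)
        (not_le.mpr hq1)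
    · exact absurd
        (show sInf ((fun q : ℚ => (q:ℝ)) '' Uq b a) ≤ (q:ℝ) from
          csInf_le (Uq_bddBelow hb a) ⟨q, h, rfl⟩)
        (not_le.mpr hq2)

lemma holderF_neg (hb : 0 < b) (a : Γ) : holderF b (-a) = - holderF b a := by
  rw [holderF_eq_sInf hb a, holderF]
  have himg : (fun q : ℚ => (q : ℝ)) '' Lq b (-a)
      = -((fun q : ℚ => (q : ℝ)) '' Uq b a) := by
    ext x
    simp only [Set.mem_neg, Set.mem_image]
    constructor
    · rintro ⟨q, hq, rfl⟩
      exact ⟨-q, by rwa [← neg_mem_Lq_neg_iff, neg_neg], by push_cast; ring⟩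
    · rintro ⟨q, hq, hx⟩
      exact ⟨-q, by rwa [neg_mem_Lq_neg_iff], by push_cast; linarith⟩
  rw [himg, eq_comm, neg_eq_iff_eq_neg, Real.sInf_def]

lemma add_mem_Lq {a a' : Γ} {q q' : ℚ} (hq : q ∈ Lq b a) (hq' : q' ∈ Lq b a') :
    q + q' ∈ Lq b (a + a') := by
  have hpd : (0:ℤ) < (q.den : ℤ) := by exact_mod_cast q.pos
  have hqd : (0:ℤ) < (q'.den : ℤ) := by exact_mod_cast q'.pos
  rw [mem_Lq_iff (m := q.num * q'.den + q'.num * q.den) (n := (q.den:ℤ) * q'.den)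
    (by positivity) ?_]
  · have h1 : ((q'.den:ℤ) * q.num) • b ≤ ((q'.den:ℤ) * (q.den:ℤ)) • a := by
      rw [mul_zsmul, mul_zsmul]; exact zsmul_le_zsmul_right hqd.le hq
    have h2 : ((q.den:ℤ) * q'.num) • b ≤ ((q.den:ℤ) * (q'.den:ℤ)) • a' := by
      rw [mul_zsmul, mul_zsmul]; exact zsmul_le_zsmul_right hpd.le hq'
    have := add_le_add h1 h2
    rw [← add_zsmul] at this
    calc (q.num * q'.den + q'.num * q.den) • b
        = ((q'.den:ℤ) * q.num + (q.den:ℤ) * q'.num) • b := by ring_nf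
      _ ≤ ((q'.den:ℤ) * (q.den:ℤ)) • a + ((q.den:ℤ) * (q'.den:ℤ)) • a' := this
      _ = ((q.den:ℤ) * (q'.den:ℤ)) • (a + a') := by
          rw [smul_add, mul_comm]
  · have hd : ((q.den : ℚ)) ≠ 0 := by exact_mod_cast q.den_nz
    have hd' : ((q'.den : ℚ)) ≠ 0 := by exact_mod_cast q'.den_nz
    conv_lhs => rw [← Rat.num_div_den q, ← Rat.num_div_den q']
    push_cast
    field_simp

lemma le_holderF_add (hb : 0 < b) (a a' : Γ) :
    holderF b a + holderF b a' ≤ holderF b (a + a') := by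
  rw [← sub_nonneg]
  have h1 : holderF b a ≤ holderF b (a + a') - holderF b a' := by
    apply csSup_le ((Lq_nonempty hb a).image _)
    rintro x ⟨q, hq, rfl⟩
    rw [le_sub_iff_add_le, add_comm, ← le_sub_iff_add_le]
    apply csSup_le ((Lq_nonempty hb a').image _)
    rintro y ⟨q', hq', rfl⟩
    rw [le_sub_iff_add_le]
    have : ((q':ℝ) + q) = ((q' + q : ℚ) : ℝ) := by push_cast; ring
    rw [this]
    exact le_csSup (Lq_bddAbove hb _) ⟨q' + q, by
      have := add_mem_Lq hq' hq
      rwa [add_comm a' a] at this, rfl⟩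
  linarith

lemma holderF_add (hb : 0 < b) (a a' : Γ) :
    holderF b (a + a') = holderF b a + holderF b a' := by
  apply le_antisymm
  · have h := le_holderF_add hb (a + a') (-a')
    rw [add_neg_cancel_right, holderF_neg hb] at h
    linarith
  · exact le_holderF_add hb a a'

lemma holderF_mono (hb : 0 < b) : Monotone (holderF b) := by
  intro a a' h
  apply csSup_le_csSup (Lq_bddAbove hb a') ((Lq_nonempty hb a).image _)
  rintro x ⟨q, hq, rfl⟩
  refine ⟨q, ?_, rfl⟩
  exact hq.trans (zsmul_le_zsmul_right (by positivity) h)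

lemma holderF_strictMono (hb : 0 < b) : StrictMono (holderF b) := by
  intro a a' h
  have hd : 0 < a' - a := sub_pos.mpr h
  obtain ⟨n, hn⟩ := Archimedean.arch b hd
  have hn0 : 0 < n := by
    rcases Nat.eq_zero_or_pos n with rfl | h'
    · simp at hn; exact absurd hn (not_le.mpr hb)
    · exact h'
  have key : (((1:ℤ):ℚ) / ((n:ℤ):ℚ)) ∈ Lq b (a' - a) := by
    rw [mem_Lq_iff (m := 1) (n := (n:ℤ)) (by exact_mod_cast hn0) rfl, one_zsmul]
    exact hn.trans_eq (natCast_zsmul (a' - a) n).symm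
  have h1 : (1:ℝ)/(n:ℝ) ≤ holderF b (a' - a) := by
    have := le_csSup (Lq_bddAbove hb (a' - a)) ⟨_, key, rfl⟩
    calc (1:ℝ)/(n:ℝ) = (((((1:ℤ):ℚ)) / ((n:ℤ):ℚ) : ℚ) : ℝ) := by push_cast; ring
      _ ≤ _ := this
  have h2 : holderF b (a' - a) = holderF b a' - holderF b a := by
    have := holderF_add hb (a' - a) a
    rw [sub_add_cancel] at this
    linarith
  have : (0:ℝ) < 1/(n:ℝ) := by positivity
  linarith

end Holder

/-- An *isolated subgroup* of a totally ordered abelian group `Γ` is a proper subgroup `Δ`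
such that whenever `α ∈ Δ` and `β ∈ Γ` satisfy `0 ≤ β ≤ α`, then `β ∈ Δ`. -/
def IsIsolated {Γ : Type*} [AddCommGroup Γ] [LinearOrder Γ] (Δ : AddSubgroup Γ) : Prop :=
  Δ ≠ ⊤ ∧ ∀ α ∈ Δ, ∀ β : Γ, 0 ≤ β → β ≤ α → β ∈ Δ

/-- The *rank* of a totally ordered abelian group: the cardinality of its set of
isolated subgroups. -/
noncomputable def rankOrdGroup (Γ : Type*) [AddCommGroup Γ] [LinearOrder Γ] : Cardinal :=
  Cardinal.mk {Δ : AddSubgroup Γ // IsIsolated Δ}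

section Main

variable {Γ : Type*} [AddCommGroup Γ] [LinearOrder Γ] [IsOrderedAddMonoid Γ]

lemma arch'_of_embedding (h : ∃ f : Γ →+ ℝ, Function.Injective f ∧ Monotone f) :
    ∀ a b : Γ, 0 < b → ∃ n : ℕ, 0 < n ∧ a ≤ n • b := by
  obtain ⟨f, hinj, hmono⟩ := h
  intro a b hb
  have hsm : StrictMono f := hmono.strictMono_of_injective hinj
  have hfb : 0 < f b := by have := hsm hb; rwa [map_zero] at this
  obtain ⟨n, hn⟩ := Archimedean.arch (f a) hfb
  refine ⟨n + 1, Nat.succ_pos _, ?_⟩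
  have h1 : f a ≤ (n + 1) • f b := by
    refine hn.trans ?_
    rw [succ_nsmul]
    linarith
  rw [← map_nsmul] at h1
  exact hsm.le_iff_le.mp h1

lemma embedding_of_arch' (h : ∀ a b : Γ, 0 < b → ∃ n : ℕ, 0 < n ∧ a ≤ n • b) :
    ∃ f : Γ →+ ℝ, Function.Injective f ∧ Monotone f := by
  by_cases htriv : ∀ x : Γ, x = 0
  · exact ⟨0, fun x y _ => (htriv x).trans (htriv y).symm, monotone_const⟩
  · push_neg at htriv
    obtain ⟨x, hx⟩ := htriv
    have hb : 0 < |x| := abs_pos.mpr hx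
    haveI : Archimedean Γ := ⟨fun y z hz => (h y z hz).imp fun n hn => hn.2⟩
    exact ⟨AddMonoidHom.mk' (holderF |x|) (fun a a' => holderF_add hb a a'),
      (holderF_strictMono hb).injective, holderF_mono hb⟩

lemma isolated_eq_bot (h : ∀ a b : Γ, 0 < b → ∃ n : ℕ, 0 < n ∧ a ≤ n • b)
    {Δ : AddSubgroup Γ} (hΔ : IsIsolated Δ) : Δ = ⊥ := by
  by_contra hne
  rw [AddSubgroup.eq_bot_iff_forall] at hne
  push_neg at hne
  obtain ⟨x, hxΔ, hx0⟩ := hne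
  have hα : 0 < |x| := abs_pos.mpr hx0
  have hαΔ : |x| ∈ Δ := by
    rcases abs_choice x with hc | hc
    · rw [hc]; exact hxΔ
    · rw [hc]; exact Δ.neg_mem hxΔ
  apply hΔ.1
  rw [eq_top_iff]
  intro γ _
  have key : ∀ γ : Γ, 0 ≤ γ → γ ∈ Δ := by
    intro γ hγ
    obtain ⟨n, hn0, hn⟩ := h γ |x| hα
    exact hΔ.2 (n • |x|) (Δ.nsmul_mem hαΔ n) γ hγ hn
  rcases le_total 0 γ with hγ | hγ
  · exact key γ hγ
  · have := key (-γ) (neg_nonneg.mpr hγ)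
    simpa using Δ.neg_mem this

lemma rank_le_one_of_arch' (h : ∀ a b : Γ, 0 < b → ∃ n : ℕ, 0 < n ∧ a ≤ n • b) :
    rankOrdGroup Γ ≤ 1 := by
  rw [rankOrdGroup, Cardinal.le_one_iff_subsingleton]
  refine ⟨fun Δ Δ' => Subtype.ext ?_⟩
  rw [isolated_eq_bot h Δ.2, isolated_eq_bot h Δ'.2]

lemma arch'_of_rank_le_one (h : rankOrdGroup Γ ≤ 1) :
    ∀ a b : Γ, 0 < b → ∃ n : ℕ, 0 < n ∧ a ≤ n • b := by
  by_contra hna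
  push_neg at hna
  obtain ⟨a, b, hb, hab⟩ := hna
  have hab' : ∀ n : ℕ, 0 < n → n • b < a := hab
  have ha : 0 < a := lt_trans (by simpa using hb) (hab' 1 one_pos)
  rw [rankOrdGroup, Cardinal.le_one_iff_subsingleton] at h
  set Δ : AddSubgroup Γ :=
    { carrier := {x | ∃ n : ℕ, x ≤ n • b ∧ -x ≤ n • b}
      zero_mem' := ⟨0, by simp⟩
      add_mem' := by
        rintro x y ⟨n, h1, h2⟩ ⟨m, h3, h4⟩
        exact ⟨n + m, by rw [add_nsmul]; exact add_le_add h1 h3,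
          by rw [add_nsmul, neg_add]; exact add_le_add h2 h4⟩
      neg_mem' := by
        rintro x ⟨n, h1, h2⟩
        exact ⟨n, h2, by simpa using h1⟩ } with hΔdef
  have hbΔ : b ∈ Δ := ⟨1, by simp, by simpa using (neg_nonpos.mpr hb.le).trans hb.le⟩
  have haΔ : a ∉ Δ := by
    rintro ⟨n, h1, h2⟩
    rcases Nat.eq_zero_or_pos n with rfl | hn
    · simp at h1; exact absurd h1 (not_le.mpr ha)
    · exact absurd h1 (not_le.mpr (hab' n hn))
  have hIso : IsIsolated Δ := by
    constructor
    · intro htop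
      exact haΔ (htop ▸ AddSubgroup.mem_top a)
    · rintro α ⟨n, h1, h2⟩ β hβ hβα
      exact ⟨n, hβα.trans h1, (neg_nonpos.mpr hβ).trans ((nsmul_nonneg hb.le n))⟩
  have hbotIso : IsIsolated (⊥ : AddSubgroup Γ) := by
    constructor
    · intro htop
      have : b ∈ (⊥ : AddSubgroup Γ) := htop ▸ AddSubgroup.mem_top b
      rw [AddSubgroup.mem_bot] at this
      exact hb.ne' this
    · intro α hα β hβ hβα
      rw [AddSubgroup.mem_bot] at hα ⊢
      exact le_antisymm (hα ▸ hβα) hβ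
  have := h.elim ⟨Δ, hIso⟩ ⟨⊥, hbotIso⟩
  have hΔbot : Δ = ⊥ := congrArg Subtype.val this
  rw [hΔbot, AddSubgroup.mem_bot] at hbΔ
  exact hb.ne' hbΔ

end Main


/-- For a totally ordered abelian group `Γ`, the following are equivalent:
(a) `Γ` embeds into `ℝ` by an injective order-preserving group homomorphism;
(b) `Γ` has rank at most `1`;
(c) `Γ` is archimedean. -/
theorem rank_le_one_tfae (Γ : Type*) [AddCommGroup Γ] [LinearOrder Γ] [IsOrderedAddMonoid Γ] :
    ((∃ f : Γ →+ ℝ, Function.Injective f ∧ Monotone f) ↔ rankOrdGroup Γ ≤ 1) ∧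
    (rankOrdGroup Γ ≤ 1 ↔
      ∀ a b : Γ, 0 < b → ∃ n : ℕ, 0 < n ∧ a ≤ n • b) := by
  refine ⟨⟨fun h => rank_le_one_of_arch' (arch'_of_embedding h),
    fun h => embedding_of_arch' (arch'_of_rank_le_one h)⟩,
    ⟨arch'_of_rank_le_one, rank_le_one_of_arch'⟩⟩
end

section
/- Let Γ be a totally ordered abelian group and let n be a nonnegative integer. Then Γ has at most n isolated subgroups (i.e., rank(Γ) ≤ n) if and only if there exists an injective order-preserving group homomorphism from Γ to ℝ^n equipped with the lexicographic order. -/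
/-! ### Auxiliary lemmas on the lexicographic order on `Fin m → ℝ` -/

section LexLemmas

variable {m : ℕ}

lemma lex_lt_iff' (u v : Fin m → ℝ) :
    toLex u < toLex v ↔ ∃ i, (∀ j < i, u j = v j) ∧ u i < v i := Iff.rfl

lemma lex_le_iff' (u v : Fin m → ℝ) :
    toLex u ≤ toLex v ↔ (∃ i, (∀ j < i, u j = v j) ∧ u i < v i) ∨ u = v := by
  rw [le_iff_lt_or_eq]
  exact or_congr (lex_lt_iff' u v) ⟨fun h => toLex.injective h, fun h => congrArg toLex h⟩

lemma lex_coord_le {u v : Fin m → ℝ} (h : toLex u ≤ toLex v) (k : Fin m)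
    (hk : ∀ j < k, u j = v j) : u k ≤ v k := by
  rcases (lex_le_iff' u v).1 h with ⟨i, hji, hi⟩ | rfl
  · rcases lt_trichotomy i k with h' | h' | h'
    · exact absurd (hk i h') hi.ne
    · exact h' ▸ hi.le
    · exact (hji k h').le
  · exact le_rfl

lemma lex_lt_of_head {u v : Fin (m + 1) → ℝ} (h : u 0 < v 0) : toLex u < toLex v :=
  ⟨0, fun j hj => absurd hj (Fin.not_lt_zero j), h⟩

lemma lex_le_of_head_tail {u v : Fin (m + 1) → ℝ} (h0 : u 0 = v 0)
    (ht : toLex (Fin.tail u) ≤ toLex (Fin.tail v)) : toLex u ≤ toLex v := by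
  rcases (lex_le_iff' _ _).1 ht with ⟨i, hji, hi⟩ | hEq
  · refine (lex_le_iff' _ _).2 (Or.inl ⟨i.succ, ?_, hi⟩)
    intro j hj
    rcases Fin.eq_zero_or_eq_succ j with rfl | ⟨j', rfl⟩
    · exact h0
    · exact hji j' (by simpa [Fin.succ_lt_succ_iff] using hj)
  · refine le_of_eq (congrArg toLex ?_)
    funext j
    rcases Fin.eq_zero_or_eq_succ j with rfl | ⟨j', rfl⟩
    · exact h0
    · exact congrFun hEq j'

lemma cons_add_cons (a b : ℝ) (u v : Fin m → ℝ) :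
    (Fin.cons a u : Fin (m+1) → ℝ) + Fin.cons b v = Fin.cons (a + b) (u + v) := by
  funext j
  rcases Fin.eq_zero_or_eq_succ j with rfl | ⟨j', rfl⟩ <;> simp

end LexLemmas

/-! ### Cardinality -/

universe u

lemma mk_le_nat_iff {α : Type u} {n : ℕ} :
    Cardinal.mk α ≤ n ↔ ∃ f : α → Fin n, Function.Injective f := by
  rw [show ((n : Cardinal.{u})) = Cardinal.mk (ULift.{u} (Fin n)) by simp, Cardinal.le_def]
  constructor
  · rintro ⟨f⟩
    exact ⟨fun a => (f a).down, fun a b h => f.injective (ULift.down_injective h)⟩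
  · rintro ⟨f, hf⟩
    exact ⟨⟨fun a => ⟨f a⟩, fun a b h => hf (congrArg ULift.down h)⟩⟩

/-! ### Generalities on isolated subgroups -/

section Isolated

variable {Γ : Type u} [AddCommGroup Γ] [LinearOrder Γ] [IsOrderedAddMonoid Γ]

lemma isolated_le_or_le {Δ₁ Δ₂ : AddSubgroup Γ} (h₁ : IsIsolated Δ₁) (h₂ : IsIsolated Δ₂) :
    Δ₁ ≤ Δ₂ ∨ Δ₂ ≤ Δ₁ := by
  by_cases h : Δ₁ ≤ Δ₂
  · exact Or.inl h
  · obtain ⟨x, hx1, hx2⟩ := SetLike.not_le_iff_exists.1 h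
    refine Or.inr fun y hy => ?_
    have hax1 : |x| ∈ Δ₁ := abs_mem_iff.2 hx1
    have hax2 : |x| ∉ Δ₂ := fun h' => hx2 (abs_mem_iff.1 h')
    have hyx : |y| ≤ |x| := by
      by_contra h'
      exact hax2 (h₂.2 _ (abs_mem_iff.2 hy) _ (abs_nonneg x) (le_of_not_ge h'))
    exact abs_mem_iff.1 (h₁.2 _ hax1 _ (abs_nonneg y) hyx)

lemma bot_isolated [Nontrivial Γ] : IsIsolated (⊥ : AddSubgroup Γ) := by
  constructor
  · intro h
    obtain ⟨x, hx⟩ := exists_ne (0 : Γ)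
    exact hx ((AddSubgroup.mem_bot).1 (h ▸ AddSubgroup.mem_top x))
  · intro α hα β hβ hβα
    simp only [AddSubgroup.mem_bot] at *
    subst hα
    exact le_antisymm hβα hβ

lemma isolated_ne_bot_exists {Δ : AddSubgroup Γ} (h : Δ ≠ ⊥) : ∃ y ∈ Δ, y ≠ 0 := by
  by_contra h'
  push_neg at h'
  exact h (le_antisymm (fun y hy => by simpa using h' y hy) bot_le)

end Isolated

/-! ### The easy direction: embeddability implies small rank -/

section Converse

variable {Γ : Type u} [AddCommGroup Γ] [LinearOrder Γ] [IsOrderedAddMonoid Γ] {n : ℕ}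

variable (f : Γ →+ (Fin n → ℝ))

/-- If `y ∈ Δ` has `f y k ≠ 0` (first nonzero coordinate at `k`), and `x ∉ Δ` is nonnegative with
its `f`-coordinates below `k` vanishing, we get an archimedean contradiction. -/
lemma arch_contradiction
    (hmono : ∀ a b : Γ, a ≤ b → toLex (f a) ≤ toLex (f b))
    {Δ : AddSubgroup Γ} (hΔ : IsIsolated Δ) {y x : Γ} (k : Fin n)
    (hy : y ∈ Δ) (hyk : f y k ≠ 0) (hyb : ∀ j < k, f y j = 0)
    (hx : x ∉ Δ) (hx0 : 0 ≤ x) (hxb : ∀ j < k, f x j = 0) : False := by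
  set y' := |y| with hy'
  have hy'mem : y' ∈ Δ := abs_mem_iff.2 hy
  have hfy' : f y' = f y ∨ f y' = -(f y) := by
    rcases abs_choice y with h | h
    · exact Or.inl (by rw [hy', h])
    · exact Or.inr (by rw [hy', h, map_neg])
  have hy'k : f y' k ≠ 0 := by rcases hfy' with h | h <;> simp [h, hyk]
  have hy'b : ∀ j < k, f y' j = 0 := by
    intro j hj; rcases hfy' with h | h <;> simp [h, hyb j hj]
  -- f y' k > 0
  have hy'nonneg : toLex (f 0) ≤ toLex (f y') := hmono 0 y' (abs_nonneg y)
  have hy'pos : 0 < f y' k := by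
    have h0 : ∀ j < k, f (0 : Γ) j = f y' j := by
      intro j hj; simp [map_zero, hy'b j hj]
    have := lex_coord_le hy'nonneg k h0
    simp only [map_zero, Pi.zero_apply] at this
    exact lt_of_le_of_ne this (Ne.symm hy'k)
  -- for all m, m • y' < x
  have key : ∀ mm : ℕ, (mm : ℝ) * f y' k ≤ f x k := by
    intro mm
    have hmem : mm • y' ∈ Δ := AddSubgroup.nsmul_mem Δ hy'mem mm
    have hlt : mm • y' < x := by
      by_contra h'
      exact hx (hΔ.2 _ hmem _ hx0 (le_of_not_gt h'))
    have hlex := hmono _ _ hlt.le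
    have heq : ∀ j < k, f (mm • y') j = f x j := by
      intro j hj
      rw [map_nsmul]
      simp [hy'b j hj, hxb j hj]
    have := lex_coord_le hlex k heq
    rw [map_nsmul] at this
    simpa [nsmul_eq_mul] using this
  obtain ⟨mm, hmm⟩ := exists_nat_gt (f x k / f y' k)
  have := key mm
  exact absurd hmm (not_lt.2 ((le_div_iff₀ hy'pos).2 (by linarith)))

open scoped Classical in
/-- The level function used for the converse direction. -/
noncomputable def levelOf (Δ : AddSubgroup Γ) : ℕ :=
  if h : ∃ p : ℕ, ∃ hp : p < n, ∃ y ∈ Δ, f y ⟨p, hp⟩ ≠ 0 then Nat.find h else 0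

lemma converse_rank_le
    (hinj : Function.Injective f)
    (hmono : ∀ a b : Γ, a ≤ b → toLex (f a) ≤ toLex (f b)) :
    rankOrdGroup Γ ≤ n := by
  classical
  -- basic facts
  have exists_pos : ∀ {Δ : AddSubgroup Γ}, IsIsolated Δ → 0 < n := by
    intro Δ hΔ
    rcases Nat.eq_zero_or_pos n with rfl | h
    · -- n = 0 : Γ is trivial so no isolated subgroup
      exfalso
      have : Function.Injective (f : Γ → (Fin 0 → ℝ)) := hinj
      have hsub : Subsingleton Γ := ⟨fun a b => this (Subsingleton.elim _ _)⟩
      exact hΔ.1 (le_antisymm le_top (fun x _ =>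
        (Subsingleton.elim (0 : Γ) x) ▸ Δ.zero_mem))
    · exact h
  have hasP : ∀ {Δ : AddSubgroup Γ}, IsIsolated Δ → Δ ≠ ⊥ →
      ∃ p : ℕ, ∃ hp : p < n, ∃ y ∈ Δ, f y ⟨p, hp⟩ ≠ 0 := by
    intro Δ hΔ hbot
    obtain ⟨y, hy, hy0⟩ := isolated_ne_bot_exists hbot
    have : f y ≠ 0 := fun h => hy0 (hinj (h.trans (map_zero f).symm))
    obtain ⟨j, hj⟩ := Function.ne_iff.1 this
    exact ⟨j.1, j.2, y, hy, by simpa using hj⟩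
  -- the level of a non-bot isolated subgroup is ≥ 1
  have level_pos : ∀ {Δ : AddSubgroup Γ} (hΔ : IsIsolated Δ) (hbot : Δ ≠ ⊥),
      0 < levelOf f Δ := by
    intro Δ hΔ hbot
    have hP := hasP hΔ hbot
    rw [levelOf, dif_pos hP]
    rcases Nat.eq_zero_or_pos (Nat.find hP) with h | h
    case inr => exact h
    · exfalso
      obtain ⟨hp, y, hy, hyk⟩ := by
        have := Nat.find_spec hP
        rwa [h] at this
      obtain ⟨x, hxtop⟩ := SetLike.not_le_iff_exists.1 (fun hle => hΔ.1 (le_antisymm le_top hle))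
      obtain ⟨hx, hxΔ⟩ := hxtop
      exact arch_contradiction f hmono hΔ ⟨0, hp⟩ hy hyk
        (fun j hj => absurd hj (by simp [Fin.lt_def])) 
        (fun h' => hxΔ (abs_mem_iff.1 h')) (abs_nonneg x)
        (fun j hj => absurd hj (by simp [Fin.lt_def]))
  -- the level is < n for non-bot
  have level_lt : ∀ {Δ : AddSubgroup Γ} (hΔ : IsIsolated Δ) (hbot : Δ ≠ ⊥),
      levelOf f Δ < n := by
    intro Δ hΔ hbot
    have hP := hasP hΔ hbot
    rw [levelOf, dif_pos hP]
    obtain ⟨hp, -⟩ := Nat.find_spec hP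
    exact hp
  have level_bot : levelOf f (⊥ : AddSubgroup Γ) = 0 := by
    rw [levelOf, dif_neg]
    rintro ⟨p, hp, y, hy, hyk⟩
    rw [AddSubgroup.mem_bot] at hy
    subst hy
    simp at hyk
  -- levels distinguish isolated subgroups
  have level_ne : ∀ {Δ₁ Δ₂ : AddSubgroup Γ}, IsIsolated Δ₁ → IsIsolated Δ₂ → Δ₁ < Δ₂ →
      levelOf f Δ₁ ≠ levelOf f Δ₂ := by
    intro Δ₁ Δ₂ h₁ h₂ hlt
    have hΔ₂bot : Δ₂ ≠ ⊥ := fun h => not_lt_bot (h ▸ hlt)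
    rcases eq_or_ne Δ₁ ⊥ with rfl | hΔ₁bot
    · rw [level_bot]
      exact fun h => absurd (level_pos h₂ hΔ₂bot) (by omega)
    · intro hEq
      have hP₁ := hasP h₁ hΔ₁bot
      have hP₂ := hasP h₂ hΔ₂bot
      rw [levelOf, dif_pos hP₁, levelOf, dif_pos hP₂] at hEq
      set k := Nat.find hP₁ with hk
      obtain ⟨hkn, y, hy, hyk⟩ := Nat.find_spec hP₁
      -- minimality for Δ₂ (at the same value k)
      have hmin₂ : ∀ (z : Γ), z ∈ Δ₂ → ∀ j : Fin n, j.1 < k → f z j = 0 := by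
        intro z hz j hj
        by_contra h'
        have : j.1 < Nat.find hP₂ := by omega
        exact Nat.find_min hP₂ this ⟨j.2, z, hz, by simpa using h'⟩
      obtain ⟨x, hxΔ₂, hxΔ₁⟩ := SetLike.exists_of_lt hlt
      refine arch_contradiction f hmono h₁ ⟨k, hkn⟩ hy hyk ?_ 
        (fun h' => hxΔ₁ (abs_mem_iff.1 h')) (abs_nonneg x) ?_
      · intro j hj
        exact hmin₂ y (hlt.le hy) j (by simpa [Fin.lt_def] using hj)
      · intro j hj
        exact hmin₂ |x| (abs_mem_iff.2 hxΔ₂) j (by simpa [Fin.lt_def] using hj)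
  -- build the injection
  rw [rankOrdGroup, mk_le_nat_iff]
  refine ⟨fun ⟨Δ, hΔ⟩ => ⟨levelOf f Δ, ?_⟩, ?_⟩
  · rcases eq_or_ne Δ ⊥ with rfl | hbot
    · rw [level_bot]; exact exists_pos hΔ
    · exact level_lt hΔ hbot
  · rintro ⟨Δ₁, h₁⟩ ⟨Δ₂, h₂⟩ h
    have h' : levelOf f Δ₁ = levelOf f Δ₂ := congrArg Fin.val (h : _)
    by_contra hne
    have hne' : Δ₁ ≠ Δ₂ := fun h'' => by subst h''; exact hne (Subtype.ext rfl)
    rcases isolated_le_or_le h₁ h₂ with hle | hle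
    · exact level_ne h₁ h₂ (lt_of_le_of_ne hle hne') h'
    · exact level_ne h₂ h₁ (lt_of_le_of_ne hle hne'.symm) h'.symm

end Converse

/-! ### The hard direction: small rank implies embeddability -/

section Forward

variable {Γ : Type u} [AddCommGroup Γ] [LinearOrder Γ] [IsOrderedAddMonoid Γ]

/-- Integer multiples of a positive element are ordered like the integers. -/
lemma zsmul_le_zsmul_iff_of_pos {e : Γ} (he : 0 < e) {k l : ℤ} :
    k • e ≤ l • e ↔ k ≤ l := by
  constructor
  · intro h
    by_contra h'
    push_neg at h'
    exact absurd (zsmul_lt_zsmul_left he h') (not_lt.2 h)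
  · intro h
    exact zsmul_le_zsmul_left he.le h

/-- The set of "rational approximations from below" of `x` relative to the scale `e`. -/
def Sset (e x : Γ) : Set ℝ :=
  { r | ∃ (p : ℤ) (q : ℕ), 0 < q ∧ r = (p : ℝ) / (q : ℝ) ∧ p • e ≤ (q : ℤ) • x }

/-- The Hölder-type functional. -/
noncomputable def holderPhi (e x : Γ) : ℝ := sSup (Sset e x)

lemma sset_nonempty {e : Γ} (x : Γ) {mx : ℕ} (hmx : -x ≤ mx • e) : (Sset e x).Nonempty := by
  refine ⟨-(mx : ℤ), -(mx : ℤ), 1, one_pos, by simp, ?_⟩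
  have : -((mx : ℤ) • e) ≤ x := by
    rw [neg_le]
    rw [natCast_zsmul]
    exact hmx
  simpa [neg_zsmul] using this

lemma sset_bddAbove {e : Γ} (he : 0 < e) (x : Γ) {Mx : ℕ} (hMx : x ≤ Mx • e) :
    BddAbove (Sset e x) := by
  refine ⟨(Mx : ℝ), ?_⟩
  rintro r ⟨p, q, hq, rfl, hpq⟩
  have hMx' : x ≤ (Mx : ℤ) • e := by rwa [natCast_zsmul]
  have h2 : p • e ≤ ((q : ℤ) * (Mx : ℤ)) • e := by
    calc p • e ≤ (q : ℤ) • x := hpq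
    _ ≤ (q : ℤ) • ((Mx : ℤ) • e) := zsmul_le_zsmul_right (by positivity) hMx'
    _ = ((q : ℤ) * (Mx : ℤ)) • e := (mul_zsmul e _ _).symm
  have hple : p ≤ (q : ℤ) * (Mx : ℤ) := (zsmul_le_zsmul_iff_of_pos he).1 h2
  rw [div_le_iff₀ (by exact_mod_cast hq)]
  calc (p : ℝ) ≤ ((q : ℤ) * (Mx : ℤ) : ℤ) := by exact_mod_cast hple
  _ = (Mx : ℝ) * (q : ℝ) := by push_cast; ring

end Forward

section Forward2

variable {Γ : Type u} [AddCommGroup Γ] [LinearOrder Γ] [IsOrderedAddMonoid Γ]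

lemma reach {Δm : AddSubgroup Γ} (hΔ : IsIsolated Δm)
    (hmax : ∀ Δ', IsIsolated Δ' → Δ' ≤ Δm)
    {x : Γ} (hx : x ∉ Δm) (hx0 : 0 < x) (z : Γ) : ∃ mz : ℕ, z ≤ mz • x := by
  set C : AddSubgroup Γ :=
    { carrier := { w | ∃ mz : ℕ, |w| ≤ mz • x }
      zero_mem' := ⟨0, by simp⟩
      add_mem' := by
        rintro a b ⟨ma, hma⟩ ⟨mb, hmb⟩
        exact ⟨ma + mb, (abs_add_le a b).trans (by rw [add_nsmul]; exact add_le_add hma hmb)⟩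
      neg_mem' := by
        rintro a ⟨ma, hma⟩
        exact ⟨ma, by rwa [abs_neg]⟩ } with hC
  have hxC : x ∈ C := ⟨1, by simp [abs_of_nonneg hx0.le]⟩
  have hCtop : C = ⊤ := by
    by_contra hne
    have hiso : IsIsolated C := by
      refine ⟨hne, ?_⟩
      rintro α ⟨ma, hma⟩ β hβ0 hβα
      exact ⟨ma, le_trans (by rw [abs_of_nonneg hβ0]; exact hβα.trans (le_abs_self α)) hma⟩
    exact hx (hmax C hiso hxC)
  have hzC : z ∈ C := by rw [hCtop]; trivial
  obtain ⟨mz, hmz⟩ := hzC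
  exact ⟨mz, (le_abs_self z).trans hmz⟩

variable {Δm : AddSubgroup Γ} {e : Γ}

/-- Bundle of hypotheses for the Hölder construction. -/
structure HolderData (Δm : AddSubgroup Γ) (e : Γ) : Prop where
  iso : IsIsolated Δm
  max : ∀ Δ', IsIsolated Δ' → Δ' ≤ Δm
  epos : 0 < e
  enmem : e ∉ Δm

namespace HolderData

variable (H : HolderData Δm e)
include H

lemma nonempty (x : Γ) : (Sset e x).Nonempty := by
  obtain ⟨mx, hmx⟩ := reach H.iso H.max H.enmem H.epos (-x)
  exact sset_nonempty x hmx

lemma bdd (x : Γ) : BddAbove (Sset e x) := by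
  obtain ⟨Mx, hMx⟩ := reach H.iso H.max H.enmem H.epos x
  exact sset_bddAbove H.epos x hMx

lemma mem_add {x y : Γ} {r s : ℝ} (hr : r ∈ Sset e x) (hs : s ∈ Sset e y) :
    r + s ∈ Sset e (x + y) := by
  obtain ⟨p, q, hq, rfl, hpq⟩ := hr
  obtain ⟨p', q', hq', rfl, hpq'⟩ := hs
  refine ⟨p * q' + p' * q, q * q', Nat.mul_pos hq hq', ?_, ?_⟩
  · rw [div_add_div _ _ (by exact_mod_cast hq.ne') (by exact_mod_cast hq'.ne')]
    push_cast
    ring_nf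
  · have h1 : (p * (q' : ℤ)) • e ≤ ((q : ℤ) * (q' : ℤ)) • x := by
      rw [mul_comm p, mul_zsmul, mul_comm (q : ℤ), mul_zsmul]
      exact zsmul_le_zsmul_right (by positivity) hpq
    have h2 : (p' * (q : ℤ)) • e ≤ ((q : ℤ) * (q' : ℤ)) • y := by
      rw [mul_comm p', mul_zsmul, mul_zsmul]
      exact zsmul_le_zsmul_right (by positivity) hpq'
    have h3 := add_le_add h1 h2
    rw [← add_zsmul, ← smul_add] at h3
    convert h3 using 2
    exact Nat.cast_mul q q'

lemma le_phi_add (x y : Γ) :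
    holderPhi e x + holderPhi e y ≤ holderPhi e (x + y) := by
  have key : ∀ s ∈ Sset e y, holderPhi e x + s ≤ holderPhi e (x + y) := by
    intro s hs
    have h1 : holderPhi e x ≤ holderPhi e (x + y) - s := by
      apply csSup_le (H.nonempty x)
      intro r hr
      have hle : r + s ≤ holderPhi e (x + y) := le_csSup (H.bdd (x + y)) (H.mem_add hr hs)
      linarith
    linarith
  have h2 : holderPhi e y ≤ holderPhi e (x + y) - holderPhi e x := by
    apply csSup_le (H.nonempty y)
    intro s hs
    have h3 := key s hs
    linarith
  linarith

lemma not_mem_sset {x : Γ} {α : ℚ} (hα : holderPhi e x < (α : ℝ)) :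
    (α.den : ℤ) • x < α.num • e := by
  by_contra h'
  push_neg at h'
  have hmem : (α : ℝ) ∈ Sset e x := ⟨α.num, α.den, α.pos, by rw [Rat.cast_def], h'⟩
  exact absurd (le_csSup (H.bdd x) hmem) (not_le.2 hα)

omit H in
lemma zsmul_congr {a b : ℤ} (x : Γ) (h : a = b) : a • x = b • x := by rw [h]

lemma phi_add_le (x y : Γ) :
    holderPhi e (x + y) ≤ holderPhi e x + holderPhi e y := by
  apply csSup_le (H.nonempty (x + y))
  rintro t ⟨p, q, hq, rfl, hpq⟩
  by_contra h'
  push_neg at h'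
  obtain ⟨α, hα1, hα2⟩ := exists_rat_btwn
    (show holderPhi e x < (p : ℝ) / q - holderPhi e y by linarith)
  obtain ⟨β, hβ1, hβ2⟩ := exists_rat_btwn
    (show holderPhi e y < (p : ℝ) / q - α by linarith)
  have hbx := H.not_mem_sset hα1
  have hby := H.not_mem_sset hβ1
  set A := α.num with hA
  set B := (α.den : ℤ) with hB
  set Cc := β.num with hCc
  set D := (β.den : ℤ) with hD
  have hB0 : (0 : ℤ) < B := by rw [hB]; exact_mod_cast α.pos
  have hD0 : (0 : ℤ) < D := by rw [hD]; exact_mod_cast β.pos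
  have hq0 : (0 : ℤ) < (q : ℤ) := by exact_mod_cast hq
  have s1 : (B * D * (q : ℤ)) • x < (D * (q : ℤ) * A) • e := by
    have h := zsmul_lt_zsmul_right (show (0:ℤ) < D * q by positivity) hbx
    rw [← mul_zsmul, ← mul_zsmul] at h
    calc (B * D * (q : ℤ)) • x = (D * (q : ℤ) * B) • x := zsmul_congr x (by ring)
    _ < (D * (q : ℤ) * A) • e := by
        calc (D * (q : ℤ) * B) • x = (D * (q:ℤ) * B) • x := rfl
        _ < _ := by
            have h2 : (D * (q:ℤ) * B) • x < (D * (q:ℤ) * A) • e := h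
            exact h2
  have s2 : (B * D * (q : ℤ)) • y < (B * (q : ℤ) * Cc) • e := by
    have h := zsmul_lt_zsmul_right (show (0:ℤ) < B * q by positivity) hby
    rw [← mul_zsmul, ← mul_zsmul] at h
    calc (B * D * (q : ℤ)) • y = (B * (q : ℤ) * D) • y := zsmul_congr y (by ring)
    _ < (B * (q : ℤ) * Cc) • e := h
  have hsum : (B * D * (q : ℤ)) • (x + y) < (D * (q:ℤ) * A + B * (q:ℤ) * Cc) • e := by
    rw [smul_add, add_zsmul]
    exact add_lt_add s1 s2
  have hp : (B * D * p) • e ≤ (B * D * (q:ℤ)) • (x + y) := by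
    have h := zsmul_le_zsmul_right (show (0:ℤ) ≤ B * D by positivity) hpq
    rw [← mul_zsmul, ← mul_zsmul] at h
    exact h
  have hint : B * D * p < D * (q:ℤ) * A + B * (q:ℤ) * Cc := by
    by_contra hcon
    push_neg at hcon
    have h4 := zsmul_le_zsmul_left H.epos.le hcon
    exact absurd (lt_of_le_of_lt (h4.trans hp) hsum) (lt_irrefl _)
  have hr : (B : ℝ) * D * p < D * q * A + B * q * Cc := by exact_mod_cast hint
  have hB0' : (0 : ℝ) < (B : ℝ) := by exact_mod_cast hB0
  have hD0' : (0 : ℝ) < (D : ℝ) := by exact_mod_cast hD0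
  have hq0' : (0 : ℝ) < (q : ℝ) := by exact_mod_cast hq
  have hfin : (p : ℝ) / q < (α : ℝ) + (β : ℝ) := by
    have hcα : (α : ℝ) = (A : ℝ) / (B : ℝ) := by rw [Rat.cast_def, hA, hB]; push_cast; ring
    have hcβ : (β : ℝ) = (Cc : ℝ) / (D : ℝ) := by rw [Rat.cast_def, hCc, hD]; push_cast; ring
    rw [hcα, hcβ, div_add_div _ _ hB0'.ne' hD0'.ne', div_lt_div_iff₀ hq0' (by positivity)]
    nlinarith
  linarith

lemma phi_zero : holderPhi e (0 : Γ) = 0 := by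
  apply le_antisymm
  · apply csSup_le (H.nonempty 0)
    rintro r ⟨p, q, hq, rfl, hpq⟩
    have hp0 : p ≤ 0 := by
      by_contra h'
      push_neg at h'
      exact absurd (lt_of_lt_of_le (zsmul_pos H.epos h') (by simpa using hpq)) (lt_irrefl _)
    apply div_nonpos_of_nonpos_of_nonneg
    · exact_mod_cast hp0
    · positivity
  · exact le_csSup (H.bdd 0) ⟨0, 1, one_pos, by simp, by simp⟩

lemma phi_mono {x y : Γ} (hxy : x ≤ y) : holderPhi e x ≤ holderPhi e y := by
  apply csSup_le_csSup (H.bdd y) (H.nonempty x)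
  rintro r ⟨p, q, hq, rfl, hpq⟩
  exact ⟨p, q, hq, rfl, hpq.trans (zsmul_le_zsmul_right (by positivity) hxy)⟩

lemma phi_of_mem {δ : Γ} (hδ : δ ∈ Δm) : holderPhi e δ = 0 := by
  apply le_antisymm
  · apply csSup_le (H.nonempty δ)
    rintro r ⟨p, q, hq, rfl, hpq⟩
    have hp0 : p ≤ 0 := by
      by_contra h'
      push_neg at h'
      have hpe : p • e ∉ Δm := by
        intro hmem
        exact H.enmem (H.iso.2 _ hmem _ H.epos.le
          (by calc e = (1 : ℤ) • e := (one_zsmul e).symm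
              _ ≤ p • e := zsmul_le_zsmul_left H.epos.le h'))
      exact hpe (H.iso.2 _ (AddSubgroup.zsmul_mem Δm hδ (q : ℤ)) _
        (zsmul_pos H.epos h').le hpq)
    apply div_nonpos_of_nonpos_of_nonneg
    · exact_mod_cast hp0
    · positivity
  · by_contra h'
    push_neg at h'
    obtain ⟨mq, hmq⟩ := exists_nat_one_div_lt (show (0:ℝ) < -holderPhi e δ by linarith)
    set w := (((mq : ℕ) + 1 : ℕ) : ℤ) • δ with hwdef
    have hw : w ∈ Δm := AddSubgroup.zsmul_mem Δm hδ _
    have habs : |w| < e := by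
      by_contra hcon
      push_neg at hcon
      exact H.enmem (H.iso.2 _ ((abs_mem_iff).2 hw) _ H.epos.le hcon)
    have hmem : -(1 / ((mq : ℝ) + 1)) ∈ Sset e δ := by
      refine ⟨-1, mq + 1, Nat.succ_pos mq, by push_cast; ring, ?_⟩
      rw [neg_zsmul, one_zsmul]
      exact ((neg_lt_neg habs).le.trans (neg_abs_le w))
    have hle : -(1 / ((mq : ℝ) + 1)) ≤ holderPhi e δ := le_csSup (H.bdd δ) hmem
    linarith

lemma phi_pos {x : Γ} (hx : x ∉ Δm) (hx0 : 0 < x) : 0 < holderPhi e x := by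
  obtain ⟨mz, hmz⟩ := reach H.iso H.max hx hx0 e
  have hmz0 : 0 < mz := by
    rcases Nat.eq_zero_or_pos mz with rfl | h
    · exact absurd (H.epos.trans_le (by simpa using hmz)) (lt_irrefl _)
    · exact h
  have hmem : 1 / ((mz : ℝ)) ∈ Sset e x := by
    refine ⟨1, mz, hmz0, by push_cast; ring, ?_⟩
    rw [one_zsmul, natCast_zsmul]
    exact hmz
  have hle : 1 / (mz : ℝ) ≤ holderPhi e x := le_csSup (H.bdd x) hmem
  have : (0:ℝ) < 1 / (mz : ℝ) := by positivity
  linarith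

end HolderData

end Forward2

section Main

variable {Γ : Type u} [AddCommGroup Γ] [LinearOrder Γ] [IsOrderedAddMonoid Γ]

lemma map_isolated {Δm : AddSubgroup Γ} (hΔm : IsIsolated Δm)
    {Δ' : AddSubgroup ↥Δm} (h' : IsIsolated Δ') :
    IsIsolated (AddSubgroup.map Δm.subtype Δ') ∧ AddSubgroup.map Δm.subtype Δ' ≠ Δm := by
  have hle : AddSubgroup.map Δm.subtype Δ' ≤ Δm := by
    rintro x ⟨a, ha, rfl⟩
    exact a.2
  constructor
  · constructor
    · intro htop
      exact hΔm.1 (le_antisymm le_top (htop ▸ hle))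
    · rintro α ⟨a, ha, rfl⟩ β hβ0 hβα
      have hβm : β ∈ Δm := hΔm.2 _ a.2 β hβ0 hβα
      have : (⟨β, hβm⟩ : ↥Δm) ∈ Δ' := by
        refine h'.2 a ha ⟨β, hβm⟩ ?_ ?_
        · exact Subtype.mk_le_mk.2 hβ0
        · exact Subtype.mk_le_mk.2 hβα
      exact ⟨⟨β, hβm⟩, this, rfl⟩
  · intro hEq
    obtain ⟨a, ha⟩ : ∃ a : ↥Δm, a ∉ Δ' := by
      by_contra hc
      push_neg at hc
      exact h'.1 (le_antisymm le_top fun a _ => hc a)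
    have : (a : Γ) ∈ AddSubgroup.map Δm.subtype Δ' := by rw [hEq]; exact a.2
    obtain ⟨b, hb, hba⟩ := this
    exact ha (by rwa [show b = a from Subtype.ext hba] at hb)

lemma forward_embed : ∀ (n : ℕ) (Γ : Type u) [AddCommGroup Γ] [LinearOrder Γ] [IsOrderedAddMonoid Γ],
    rankOrdGroup Γ ≤ n → ∃ f : Γ →+ (Fin n → ℝ), Function.Injective f ∧
      ∀ a b : Γ, a ≤ b → toLex (f a) ≤ toLex (f b) := by
  intro n
  induction n with
  | zero =>
    intro Γ _ _ _ h
    have hemp : IsEmpty {Δ : AddSubgroup Γ // IsIsolated Δ} := by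
      rw [← Cardinal.mk_eq_zero_iff]
      exact le_antisymm (by simpa [rankOrdGroup] using h) zero_le
    have hsub : Subsingleton Γ := by
      by_contra hns
      haveI : Nontrivial Γ := not_subsingleton_iff_nontrivial.1 hns
      exact hemp.elim ⟨⊥, bot_isolated⟩
    exact ⟨0, fun a b _ => Subsingleton.elim a b, fun a b _ => le_rfl⟩
  | succ m ih =>
    intro Γ _ _ _ h
    by_cases hsub : Subsingleton Γ
    · exact ⟨0, fun a b _ => Subsingleton.elim a b, fun a b _ => le_rfl⟩
    haveI : Nontrivial Γ := not_subsingleton_iff_nontrivial.1 hsub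
    haveI hfin : Finite {Δ : AddSubgroup Γ // IsIsolated Δ} :=
      Cardinal.lt_aleph0_iff_finite.1 (lt_of_le_of_lt h (Cardinal.nat_lt_aleph0 _))
    -- a greatest isolated subgroup
    have hSfin : {Δ : AddSubgroup Γ | IsIsolated Δ}.Finite := Set.finite_coe_iff.1 hfin
    obtain ⟨Δm, hΔm, hmax0⟩ :=
      Set.Finite.exists_maximalFor id _ hSfin ⟨⊥, bot_isolated⟩
    have hΔm : IsIsolated Δm := hΔm
    have hmax : ∀ Δ', IsIsolated Δ' → Δ' ≤ Δm := by
      intro Δ' h'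
      rcases isolated_le_or_le h' hΔm with hle | hle
      · exact hle
      · exact hmax0 h' hle
    -- a positive element outside Δm
    obtain ⟨x₀, -, hx₀⟩ :=
      SetLike.not_le_iff_exists.1 (fun hle => hΔm.1 (le_antisymm le_top hle))
    have hx₀0 : x₀ ≠ 0 := fun hc => hx₀ (hc ▸ Δm.zero_mem)
    set e := |x₀| with he_def
    have he : 0 < e := abs_pos.2 hx₀0
    have heΔ : e ∉ Δm := fun hc => hx₀ (abs_mem_iff.1 hc)
    have H : HolderData Δm e := ⟨hΔm, hmax, he, heΔ⟩
    -- rank of Δm is at most m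
    have hrank : rankOrdGroup ↥Δm ≤ m := by
      rw [rankOrdGroup, mk_le_nat_iff]
      obtain ⟨F, hF⟩ := mk_le_nat_iff.1 (h : rankOrdGroup Γ ≤ (m + 1 : ℕ))
      classical
      set J : {Δ' : AddSubgroup ↥Δm // IsIsolated Δ'} ⊕ Unit →
          {Δ : AddSubgroup Γ // IsIsolated Δ} :=
        Sum.elim (fun Δ' => ⟨AddSubgroup.map Δm.subtype Δ'.1, (map_isolated hΔm Δ'.2).1⟩)
          (fun _ : Unit => ⟨Δm, hΔm⟩) with hJ
      have hJinj : Function.Injective J := by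
        rintro (a | a) (b | b) hab
        · simp only [hJ, Sum.elim_inl] at hab
          have := AddSubgroup.map_injective Δm.subtype_injective
            (congrArg Subtype.val hab)
          exact congrArg Sum.inl (Subtype.ext this)
        · exact absurd (congrArg Subtype.val hab) (map_isolated hΔm a.2).2
        · exact absurd (congrArg Subtype.val hab).symm (map_isolated hΔm b.2).2
        · exact congrArg Sum.inr (Subsingleton.elim a b)
      haveI : Finite {Δ' : AddSubgroup ↥Δm // IsIsolated Δ'} :=
        Finite.of_injective (fun a => J (Sum.inl a)) (fun a b hab => by
          simpa using hJinj hab)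
      haveI fA : Fintype {Δ' : AddSubgroup ↥Δm // IsIsolated Δ'} := Fintype.ofFinite _
      haveI fB : Fintype {Δ : AddSubgroup Γ // IsIsolated Δ} := Fintype.ofFinite _
      have hcard1 : Fintype.card ({Δ' : AddSubgroup ↥Δm // IsIsolated Δ'} ⊕ Unit) ≤ m + 1 := by
        calc Fintype.card ({Δ' : AddSubgroup ↥Δm // IsIsolated Δ'} ⊕ Unit)
            ≤ Fintype.card {Δ : AddSubgroup Γ // IsIsolated Δ} :=
              Fintype.card_le_of_injective J hJinj
        _ ≤ Fintype.card (Fin (m + 1)) := Fintype.card_le_of_injective F hF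
        _ = m + 1 := Fintype.card_fin _
      have hcard2 : Fintype.card {Δ' : AddSubgroup ↥Δm // IsIsolated Δ'} ≤ m := by
        rw [Fintype.card_sum] at hcard1
        simp only [Fintype.card_unit] at hcard1
        omega
      obtain ⟨emb⟩ := Function.Embedding.nonempty_of_card_le
        (hcard2.trans_eq (Fintype.card_fin m).symm)
      exact ⟨emb, emb.injective⟩
    -- the embedding of Δm from the induction hypothesis
    obtain ⟨fΔ, hfΔinj, hfΔmono⟩ := ih ↥Δm hrank
    -- extend fΔ to all of Γ using divisibility
    obtain ⟨g, hg⟩ := Module.Baer.extension_property_addMonoidHom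
      (Module.Baer.of_divisible _) Δm.subtype Δm.subtype_injective fΔ
    have hg' : ∀ d : ↥Δm, g ↑d = fΔ d := fun d => DFunLike.congr_fun hg d
    -- the Hölder functional as a homomorphism
    set Φ : Γ →+ ℝ := AddMonoidHom.mk' (holderPhi e)
      (fun a b => le_antisymm (H.phi_add_le a b) (H.le_phi_add a b)) with hΦ
    have hΦapp : ∀ x, Φ x = holderPhi e x := fun x => rfl
    -- the kernel property
    have hker : ∀ d : Γ, d ≠ 0 → Φ d = 0 → d ∈ Δm := by
      intro d hd0 hΦd
      by_contra hdm
      have habs : |d| ∉ Δm := fun hc => hdm (abs_mem_iff.1 hc)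
      have hpos := H.phi_pos habs (abs_pos.2 hd0)
      have hzero : holderPhi e |d| = 0 := by
        rcases abs_choice d with hc | hc
        · rw [hc, ← hΦapp, hΦd]
        · rw [hc, ← hΦapp, map_neg, hΦd, neg_zero]
      linarith
    -- assemble the embedding
    refine ⟨AddMonoidHom.mk' (fun x => (Fin.cons (Φ x) (g x) : Fin (m + 1) → ℝ)) ?_, ?_, ?_⟩
    · intro a b
      show (Fin.cons (Φ (a + b)) (g (a + b)) : Fin (m + 1) → ℝ)
          = Fin.cons (Φ a) (g a) + Fin.cons (Φ b) (g b)
      rw [map_add, map_add, cons_add_cons]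
    · -- injectivity
      intro a b hab
      replace hab : (Fin.cons (Φ a) (g a) : Fin (m + 1) → ℝ) = Fin.cons (Φ b) (g b) := hab
      have hhead : Φ a = Φ b := by
        have h0 := congrFun hab 0
        simpa using h0
      have htail : g a = g b := by
        funext j
        have hj := congrFun hab j.succ
        simpa using hj
      by_contra hne
      have hd0 : b - a ≠ 0 := fun hc => hne (sub_eq_zero.1 hc).symm
      have hdmem : b - a ∈ Δm := hker _ hd0 (by rw [map_sub, hhead, sub_self])
      have hfd : fΔ ⟨b - a, hdmem⟩ = 0 := by
        rw [← hg' ⟨b - a, hdmem⟩]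
        show g (b - a) = 0
        rw [map_sub, htail, sub_self]
      have heq0 := hfΔinj (hfd.trans (map_zero fΔ).symm)
      exact hd0 (congrArg Subtype.val heq0)
    · -- monotonicity
      intro a b hab
      show toLex (Fin.cons (Φ a) (g a) : Fin (m + 1) → ℝ) ≤ toLex (Fin.cons (Φ b) (g b))
      have hle := H.phi_mono hab
      rcases eq_or_lt_of_le hle with heq | hlt
      · rcases eq_or_ne a b with rfl | hne
        · exact le_rfl
        have hd0 : b - a ≠ 0 := fun hc => hne (sub_eq_zero.1 hc).symm
        have hdmem : b - a ∈ Δm := hker _ hd0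
          (by rw [map_sub]; rw [hΦapp, hΦapp, heq]; ring)
        have hdpos : (0 : ↥Δm) ≤ ⟨b - a, hdmem⟩ := Subtype.mk_le_mk.2 (sub_nonneg.2 hab)
        have hmono := hfΔmono 0 ⟨b - a, hdmem⟩ hdpos
        rw [map_zero] at hmono
        have hgd : toLex (0 : Fin m → ℝ) ≤ toLex (g b - g a) := by
          have hgba : g b - g a = g (b - a) := (map_sub g b a).symm
          rw [hgba, hg' ⟨b - a, hdmem⟩]
          exact hmono
        have htle : toLex (g a) ≤ toLex (g b) := by
          have h1 : (0 : Lex (Fin m → ℝ)) ≤ toLex (g b) - toLex (g a) := hgd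
          exact sub_nonneg.1 h1
        refine lex_le_of_head_tail ?_ ?_
        · show (Fin.cons (Φ a) (g a) : Fin (m + 1) → ℝ) 0 = (Fin.cons (Φ b) (g b) : Fin (m + 1) → ℝ) 0
          rw [Fin.cons_zero, Fin.cons_zero, hΦapp, hΦapp, heq]
        · rw [Fin.tail_cons, Fin.tail_cons]
          exact htle
      · apply le_of_lt
        apply lex_lt_of_head
        show (Fin.cons (Φ a) (g a) : Fin (m + 1) → ℝ) 0 < (Fin.cons (Φ b) (g b) : Fin (m + 1) → ℝ) 0
        rw [Fin.cons_zero, Fin.cons_zero]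
        exact hlt

end Main

/-- A totally ordered abelian group has rank at most `n` if and only if it admits an
injective order-preserving group homomorphism into `ℝ^n` with the lexicographic order. -/
theorem rank_le_iff_embeds_lex (Γ : Type*) [AddCommGroup Γ] [LinearOrder Γ] [IsOrderedAddMonoid Γ] (n : ℕ) :
    rankOrdGroup Γ ≤ n ↔
      ∃ f : Γ →+ (Fin n → ℝ), Function.Injective f ∧
        ∀ a b : Γ, a ≤ b → toLex (f a) ≤ toLex (f b) := by
  constructor
  · exact forward_embed n Γ
  · rintro ⟨f, hinj, hmono⟩
    exact converse_rank_le f hinj hmono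
end

section
/- Let F be a field and let O be a local subring of F whose fraction field is F (every element of F is a quotient of two elements of O). Then O is a valuation subring of F if and only if O is maximal under domination among local subrings of F with fraction field F; here a local subring O' of F dominates O if O ⊆ O' and the maximal ideal of O' contracts to the maximal ideal of O. -/
/-! Under the domination order on local subrings of `F`, valuation subrings are maximal, and by
Zorn's lemma every local subring is dominated by a valuation subring. Domination of
subrings is the same as the inclusion being a local homomorphism, and a valuation subring
of `F` has fraction field `F`, so a maximal `O` coincides with a valuation subring
dominating it, while a valuation subring cannot be dominated by a strictly larger ring. -/

open IsLocalRing

lemma Subring.isLocalHom_inclusion_iff {R : Type*} [CommRing R] {A B : Subring R}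
    [IsLocalRing A] [IsLocalRing B] (h : A ≤ B) :
    IsLocalHom (Subring.inclusion h) ↔ ∀ (x : R) (hx : x ∈ A),
      ((⟨x, h hx⟩ : B) ∈ maximalIdeal B ↔ (⟨x, hx⟩ : A) ∈ maximalIdeal A) := by
  refine ⟨fun _ x hx => SetLike.ext_iff.mp (maximalIdeal_comap (inclusion h)) ⟨x, hx⟩,
    fun H => ((local_hom_TFAE (inclusion h)).out 4 0).mp ?_⟩
  ext ⟨x, hx⟩
  exact H x hx

lemma ValuationSubring.exists_div_eq {K : Type*} [Field K] (B : ValuationSubring K) (x : K) :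
    ∃ a b : B.toSubring, (b : K) ≠ 0 ∧ x = (a : K) / (b : K) := by
  rcases B.mem_or_inv_mem x with hx | hx
  · exact ⟨⟨x, hx⟩, 1, one_ne_zero, (div_one x).symm⟩
  · rcases eq_or_ne x 0 with rfl | hx0
    · exact ⟨0, 1, one_ne_zero, by simp⟩
    · exact ⟨1, ⟨x⁻¹, hx⟩, inv_ne_zero hx0, by simp⟩

theorem valuation_subring_iff_maximal_under_domination_general
    {F : Type*} [Field F] (O : Subring F) [IsLocalRing O] :
    (∀ x : F, x ≠ 0 → x ∈ O ∨ x⁻¹ ∈ O) ↔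
      (∀ (O' : Subring F) [IsLocalRing O'],
        (∀ x : F, ∃ a b : O', (b : F) ≠ 0 ∧ x = (a : F) / (b : F)) →
        ∀ (h : O ≤ O'),
        (∀ (x : F) (hx : x ∈ O),
          ((⟨x, h hx⟩ : O') ∈ IsLocalRing.maximalIdeal O' ↔
            (⟨x, hx⟩ : O) ∈ IsLocalRing.maximalIdeal O)) →
        O' = O) := by
  constructor
  · intro hval O' _ _ hOO' hdom
    let V := ValuationSubring.ofSubring O fun x =>
      (eq_or_ne x 0).elim (fun hx => .inl (hx ▸ O.zero_mem)) (hval x)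
    have hVO' : V.toLocalSubring ≤ LocalSubring.mk O' :=
      ⟨hOO', (Subring.isLocalHom_inclusion_iff hOO').mpr hdom⟩
    exact le_antisymm (V.isMax_toLocalSubring hVO').1 hOO'
  · intro hmax x _
    obtain ⟨B, hOB, hlocal⟩ := (LocalSubring.mk O).exists_le_valuationSubring
    have : IsLocalRing B.toSubring := B.toLocalSubring.isLocalRing
    have hBO : B.toSubring = O :=
      hmax B.toSubring B.exists_div_eq hOB ((Subring.isLocalHom_inclusion_iff hOB).mp hlocal)
    exact hBO ▸ B.mem_or_inv_mem x

/-- A local subring `O` of a field `F` whose fraction field is `F` is a valuation subring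
of `F` if and only if it is maximal under domination among local subrings of `F` with
fraction field `F`: here `O'` dominates `O` if `O ⊆ O'` and the maximal ideal of `O'`
contracts to the maximal ideal of `O`. -/
theorem valuation_subring_iff_maximal_under_domination
    {F : Type*} [Field F] (O : Subring F) [IsLocalRing O]
    (hfrac : ∀ x : F, ∃ a b : O, (b : F) ≠ 0 ∧ x = (a : F) / (b : F)) :
    (∀ x : F, x ≠ 0 → x ∈ O ∨ x⁻¹ ∈ O) ↔
      (∀ (O' : Subring F) [IsLocalRing O'],
        (∀ x : F, ∃ a b : O', (b : F) ≠ 0 ∧ x = (a : F) / (b : F)) →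
        ∀ (h : O ≤ O'),
        (∀ (x : F) (hx : x ∈ O),
          ((⟨x, h hx⟩ : O') ∈ IsLocalRing.maximalIdeal O' ↔
            (⟨x, hx⟩ : O) ∈ IsLocalRing.maximalIdeal O)) →
        O' = O) :=
  valuation_subring_iff_maximal_under_domination_general O
end

section
/- Let E/F be an extension of fields and let A be a valuation subring of F. Then there exists a valuation subring B of E such that B ∩ F = A, i.e., the preimage of B under the inclusion F → E equals A. -/
/-! By Chevalley's extension theorem, the local ring `A` maps to a valuation subring `B` of `E`
by a local homomorphism. Then `B ∩ F` is a valuation subring of `F` dominating `A`, and valuation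
subrings are maximal for domination, so `B ∩ F = A`. -/

namespace ValuationSubring

variable {K L : Type*} [Field K] [Field L]

theorem comap_eq_of_isLocalHom (f : K →+* L) (A : ValuationSubring K) (B : ValuationSubring L)
    (hAB : ∀ a : A, f a ∈ B) [IsLocalHom ((f.comp A.subtype).codRestrict B.toSubring hAB)] :
    B.comap f = A := by
  have hle : A.toSubring ≤ (B.comap f).toSubring := fun a ha ↦ hAB ⟨a, ha⟩
  let g : (B.comap f).toSubring →+* B.toSubring :=
    (f.comp (B.comap f).subtype).codRestrict B.toSubring fun x ↦ x.2
  have : IsLocalHom (g.comp (Subring.inclusion hle)) :=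
    inferInstanceAs (IsLocalHom ((f.comp A.subtype).codRestrict B.toSubring hAB))
  have hdom : A.toLocalSubring ≤ (B.comap f).toLocalSubring :=
    ⟨hle, isLocalHom_of_comp (Subring.inclusion hle) g⟩
  exact toLocalSubring_injective (le_antisymm (A.isMax_toLocalSubring hdom) hdom)

theorem exists_comap_eq (f : K →+* L) (A : ValuationSubring K) :
    ∃ B : ValuationSubring L, B.comap f = A := by
  obtain ⟨B, hAB, _⟩ := IsLocalRing.exists_factor_valuationRing (f.comp A.subtype)
  exact ⟨B, comap_eq_of_isLocalHom f A B hAB⟩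

end ValuationSubring

/-- Every valuation subring of a field `F` extends to a valuation subring of any field
extension `E` of `F`: there is a valuation subring `B` of `E` whose preimage in `F`
is the given valuation subring `A`. -/
theorem exists_valuationSubring_extension
    {F E : Type*} [Field F] [Field E] [Algebra F E] (A : ValuationSubring F) :
    ∃ B : ValuationSubring E, ∀ x : F, algebraMap F E x ∈ B ↔ x ∈ A := by
  obtain ⟨B, hB⟩ := A.exists_comap_eq (algebraMap F E)
  exact ⟨B, fun x ↦ by rw [← hB, ValuationSubring.mem_comap]⟩
end

section
/- Let E/F be a finite extension of fields, let w be a valuation on E with values in a totally ordered abelian group Γ, and let v be the restriction of w to F. Let e(w/v) = [Γ_w : Γ_v] be the index of the value group of v in the value group of w, and let f(w/v) = [κ_w : κ_v] be the degree of the residue field extension induced by the inclusion o_v ⊆ o_w. Then e(w/v) and f(w/v) are both finite and e(w/v)·f(w/v) ≤ [E : F]. -/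
section Aux

variable {E Γ : Type*} [Field E] [AddCommGroup Γ] [LinearOrder Γ] [IsOrderedAddMonoid Γ]
variable (w : E → WithTop Γ)
variable (hw_mul : ∀ x y : E, w (x * y) = w x + w y)
variable (hw_add : ∀ x y : E, min (w x) (w y) ≤ w (x + y))
variable (hw_one : w 1 = 0)
variable (hw_zero : w 0 = ⊤)

include hw_mul hw_one in
theorem w_neg_aux (x : E) : w (-x) = w x := by
  have h1 : w (-1 : E) + w (-1 : E) = 0 := by
    rw [← hw_mul, neg_one_mul, neg_neg, hw_one]
  have h2 : w (-1 : E) = 0 := by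
    cases hne : w (-1 : E) with
    | top => rw [hne] at h1; simp at h1
    | coe g =>
      rw [hne, ← WithTop.coe_add, ← WithTop.coe_zero, WithTop.coe_inj] at h1
      have : g = 0 := by
        rcases lt_trichotomy g 0 with h | h | h
        · have := add_lt_add h h; rw [h1] at this; simp at this
        · exact h
        · have := add_lt_add h h; rw [h1] at this; simp at this
      exact_mod_cast this
  calc w (-x) = w ((-1) * x) := by rw [neg_one_mul]
    _ = w (-1 : E) + w x := hw_mul _ _
    _ = w x := by rw [h2, zero_add]

include hw_mul hw_add hw_one in
theorem w_add_of_lt_aux {a b : E} (h : w a < w b) : w (a + b) = w a := by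
  have h1 : w a ≤ w (a + b) := by
    have := hw_add a b
    rwa [min_eq_left h.le] at this
  refine le_antisymm ?_ h1
  by_contra hc
  push_neg at hc
  have h2 : min (w (a + b)) (w (-b)) ≤ w a := by
    have := hw_add (a + b) (-b)
    simpa using this
  rw [w_neg_aux w hw_mul hw_one] at h2
  have := lt_min hc h
  exact absurd (this.trans_le h2) (lt_irrefl _)

include hw_mul hw_add hw_one in
theorem w_sum_eq_aux {ι : Type*} (t : ι → E) (s : Finset ι) (hs : s.Nonempty)
    (hd : ∀ i ∈ s, ∀ k ∈ s, w (t i) = w (t k) → i = k) :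
    ∃ i ∈ s, w (∑ k ∈ s, t k) = w (t i) := by
  classical
  induction s using Finset.induction_on with
  | empty => exact absurd hs (by simp)
  | @insert a s ha ih =>
    by_cases hse : s.Nonempty
    · obtain ⟨i, hi, hwi⟩ := ih hse (fun i hi k hk h =>
        hd i (Finset.mem_insert_of_mem hi) k (Finset.mem_insert_of_mem hk) h)
      rw [Finset.sum_insert ha]
      have hne : w (t a) ≠ w (∑ k ∈ s, t k) := by
        rw [hwi]
        intro h
        exact ha ((hd a (Finset.mem_insert_self a s) i (Finset.mem_insert_of_mem hi) h) ▸ hi)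
      rcases hne.lt_or_gt with h | h
      · exact ⟨a, Finset.mem_insert_self a s, w_add_of_lt_aux w hw_mul hw_add hw_one h⟩
      · refine ⟨i, Finset.mem_insert_of_mem hi, ?_⟩
        rw [add_comm (t a), w_add_of_lt_aux w hw_mul hw_add hw_one h, hwi]
    · rw [Finset.not_nonempty_iff_eq_empty] at hse
      subst hse
      exact ⟨a, Finset.mem_insert_self a _, by simp⟩

end Aux


set_option maxHeartbeats 1000000 in
set_option synthInstance.maxHeartbeats 400000 in
theorem mcl {F E Γ : Type*} [Field F] [Field E] [Algebra F E]
    [AddCommGroup Γ] [LinearOrder Γ] [IsOrderedAddMonoid Γ]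
    (w : E → WithTop Γ)
    (hw_mul : ∀ x y : E, w (x * y) = w x + w y)
    (hw_add : ∀ x y : E, min (w x) (w y) ≤ w (x + y))
    (hw_one : w 1 = 0)
    (hw_zero : w 0 = ⊤)
    (hw_top : ∀ x : E, w x = ⊤ → x = 0)
    (ow : Subring E) (how : ∀ x : E, x ∈ ow ↔ 0 ≤ w x)
    (ov : Subring F) (hov : ∀ x : F, x ∈ ov ↔ 0 ≤ w (algebraMap F E x))
    (mw : Ideal ow) (hmw : ∀ x : ow, x ∈ mw ↔ 0 < w (x : E))
    (mv : Ideal ov) (hmv : ∀ x : ov, x ∈ mv ↔ 0 < w (algebraMap F E (x : F)))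
    (j : ov ⧸ mv →+* ow ⧸ mw)
    (hj : ∀ (x : F) (hx : x ∈ ov),
      j (Ideal.Quotient.mk mv ⟨x, hx⟩) =
        Ideal.Quotient.mk mw ⟨algebraMap F E x, (how _).mpr ((hov x).mp hx)⟩)
    {n m : ℕ} (x : Fin n → E) (hx0 : ∀ i, x i ≠ 0)
    (hxd : ∀ i i' : Fin n, ∀ c : F, c ≠ 0 →
      w (x i) = w (x i') + w (algebraMap F E c) → i = i')
    (z : Fin m → ow)
    (hz : ∀ a : Fin m → ov ⧸ mv,
      (∑ k, j (a k) * Ideal.Quotient.mk mw (z k)) = 0 → ∀ k, a k = 0) :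
    LinearIndependent F (fun p : Fin n × Fin m => x p.1 * (z p.2 : E)) := by
  classical
  set ψ := algebraMap F E with hψ
  have hψinj : Function.Injective ψ := (algebraMap F E).injective
  have hψ0 : ∀ c : F, c ≠ 0 → w (ψ c) ≠ ⊤ := by
    intro c hc h
    exact hc (hψinj (by rw [map_zero]; exact hw_top _ h))
  have hx_ne_top : ∀ i, w (x i) ≠ ⊤ := fun i h => hx0 i (hw_top _ h)
  rw [Fintype.linearIndependent_iff]
  intro a ha
  -- the key lemma: valuation of each "row sum"
  have key : ∀ i : Fin n, (∃ k, a (i, k) ≠ 0) →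
      ∃ c : F, c ≠ 0 ∧ w (∑ k, ψ (a (i, k)) * (z k : E)) = w (ψ c) := by
    rintro i ⟨k₀', hk₀'⟩
    set T : Finset (Fin m) := Finset.univ.filter (fun k => a (i, k) ≠ 0) with hT
    have hTne : T.Nonempty := ⟨k₀', by simp [hT, hk₀']⟩
    obtain ⟨k₀, hk₀T, hmin⟩ := T.exists_min_image (fun k => w (ψ (a (i, k)))) hTne
    set c := a (i, k₀) with hc_def
    have hc : c ≠ 0 := by simpa [hT] using hk₀T
    have hinv : w (ψ c) + w (ψ c⁻¹) = 0 := by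
      rw [← hw_mul, ← map_mul, mul_inv_cancel₀ hc, map_one, hw_one]
    have hr : ∀ k, 0 ≤ w (ψ (a (i, k) / c)) := by
      intro k
      by_cases hk : a (i, k) = 0
      · simp [hk, hw_zero]
      · have hle : w (ψ c) ≤ w (ψ (a (i, k))) := hmin k (by simp [hT, hk])
        have heq : w (ψ (a (i, k) / c)) = w (ψ (a (i, k))) + w (ψ c⁻¹) := by
          rw [div_eq_mul_inv, map_mul, hw_mul, map_inv₀]
        rw [heq]
        calc (0 : WithTop Γ) = w (ψ c) + w (ψ c⁻¹) := hinv.symm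
          _ ≤ w (ψ (a (i, k))) + w (ψ c⁻¹) := add_le_add_left hle _
    set s : ow := ∑ k, (⟨ψ (a (i, k) / c), (how _).mpr (hr k)⟩ : ow) * z k with hs_def
    -- the residue of s is nonzero
    have hmvne : mv ≠ ⊤ := by
      intro h
      have h1 := (hmv 1).mp (h ▸ Submodule.mem_top)
      rw [OneMemClass.coe_one, map_one, hw_one] at h1
      exact lt_irrefl _ h1
    haveI : Nontrivial (ov ⧸ mv) := Ideal.Quotient.nontrivial_iff.mpr hmvne
    have hres : Ideal.Quotient.mk mw s ≠ 0 := by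
      intro h0
      have hsum : (∑ k, j (Ideal.Quotient.mk mv (⟨a (i, k) / c, (hov _).mpr (hr k)⟩ : ov)) *
          Ideal.Quotient.mk mw (z k)) = 0 := by
        rw [← h0, hs_def, map_sum]
        refine Finset.sum_congr rfl fun k _ => ?_
        rw [map_mul, hj]
      have hall := hz _ hsum k₀
      rw [show (⟨a (i, k₀) / c, (hov _).mpr (hr k₀)⟩ : ov) = 1 from
        Subtype.ext (div_self hc), map_one] at hall
      exact one_ne_zero hall
    have hs0 : w (s : E) = 0 := by
      refine le_antisymm ?_ ((how _).mp s.2)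
      by_contra hlt
      push_neg at hlt
      exact hres (Ideal.Quotient.eq_zero_iff_mem.mpr ((hmw s).mpr hlt))
    refine ⟨c, hc, ?_⟩
    have hfac : (∑ k, ψ (a (i, k)) * (z k : E)) = ψ c * (s : E) := by
      rw [hs_def]
      push_cast
      rw [Finset.mul_sum]
      refine Finset.sum_congr rfl fun k _ => ?_
      rw [← mul_assoc, ← map_mul, mul_div_cancel₀ _ hc]
    rw [hfac, hw_mul, hs0, add_zero]
  -- now conclude all a = 0
  intro p
  by_contra hp
  set S : Finset (Fin n) := Finset.univ.filter (fun i => ∃ k, a (i, k) ≠ 0) with hS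
  have hpS : p.1 ∈ S := by
    simp only [hS, Finset.mem_filter, Finset.mem_univ, true_and]
    exact ⟨p.2, hp⟩
  have hSne : S.Nonempty := ⟨p.1, hpS⟩
  set b : Fin n → E := fun i => ∑ k, ψ (a (i, k)) * (z k : E) with hb
  have hchoice : ∀ i ∈ S, ∃ c : F, c ≠ 0 ∧ w (b i) = w (ψ c) := fun i hi =>
    key i (by simpa [hS] using hi)
  choose! c hc0 hwc using hchoice
  set t : Fin n → E := fun i => x i * b i with ht
  have hterm : ∀ i, ∑ k, a (i, k) • (x i * (z k : E)) = t i := by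
    intro i
    rw [ht]
    simp only
    rw [hb]
    simp only
    rw [Finset.mul_sum]
    refine Finset.sum_congr rfl fun k _ => ?_
    rw [Algebra.smul_def, ← hψ]
    ring
  have huniv : ∑ i, t i = 0 := by
    rw [← ha, Fintype.sum_prod_type]
    exact (Finset.sum_congr rfl fun i _ => hterm i).symm
  have hsumS : ∑ i ∈ S, t i = 0 := by
    rw [← huniv]
    apply Finset.sum_subset (Finset.subset_univ S)
    intro i _ hiS
    have hbz : b i = 0 := by
      rw [hb]
      simp only
      apply Finset.sum_eq_zero
      intro k _
      have hz0 : a (i, k) = 0 := by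
        by_contra h
        exact hiS (by
          simp only [hS, Finset.mem_filter, Finset.mem_univ, true_and]
          exact ⟨k, h⟩)
      rw [hz0, map_zero, zero_mul]
    rw [ht]
    simp only [hbz, mul_zero]
  have hdist : ∀ i ∈ S, ∀ i' ∈ S, w (t i) = w (t i') → i = i' := by
    intro i hi i' hi' heq
    have h1 : w (t i) = w (x i) + w (ψ (c i)) := by
      rw [ht]; simp only; rw [hw_mul, hwc i hi]
    have h2 : w (t i') = w (x i') + w (ψ (c i')) := by
      rw [ht]; simp only; rw [hw_mul, hwc i' hi']
    have hci := hc0 i hi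
    have hci' := hc0 i' hi'
    have hinvc : w (ψ (c i)) + w (ψ (c i)⁻¹) = 0 := by
      rw [← hw_mul, ← map_mul, mul_inv_cancel₀ hci, map_one, hw_one]
    apply hxd i i' (c i' / c i) (div_ne_zero hci' hci)
    have hdiv : w (ψ (c i' / c i)) = w (ψ (c i')) + w (ψ (c i)⁻¹) := by
      rw [div_eq_mul_inv, map_mul, hw_mul, map_inv₀]
    rw [hdiv]
    calc w (x i) = w (x i) + (w (ψ (c i)) + w (ψ (c i)⁻¹)) := by rw [hinvc, add_zero]
      _ = (w (x i) + w (ψ (c i))) + w (ψ (c i)⁻¹) := by rw [add_assoc]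
      _ = (w (x i') + w (ψ (c i'))) + w (ψ (c i)⁻¹) := by rw [← h1, heq, h2]
      _ = w (x i') + (w (ψ (c i')) + w (ψ (c i)⁻¹)) := by rw [add_assoc]
  obtain ⟨i, hi, hwi⟩ := w_sum_eq_aux w hw_mul hw_add hw_one t S hSne hdist
  rw [hsumS, hw_zero] at hwi
  have hne : w (t i) ≠ ⊤ := by
    rw [ht]
    simp only
    rw [hw_mul]
    exact WithTop.add_ne_top.mpr ⟨hx_ne_top i, by
      rw [hwc i hi]; exact hψ0 _ (hc0 i hi)⟩
  exact hne hwi.symm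


set_option maxHeartbeats 1000000 in
set_option synthInstance.maxHeartbeats 400000 in
/-- Fundamental inequality `e(w/v) * f(w/v) ≤ [E : F]` for an extension `w` (given by the
additive valuation `w : E → Γ ∪ {∞}`) of the valuation `v = w ∘ (F → E)` on `F`, where
`E/F` is a finite extension of fields.  The value groups `Γw`, `Γv`, valuation rings
`ow`, `ov` and their maximal ideals `mw`, `mv` are specified by their characterizing
properties, and the residue field extension is given by the induced map
`j : ov/mv → ow/mw`.  The conclusion asserts that the ramification index
`e = [Γw : Γv]` is finite (nonzero as a `Nat`-valued index), the residual degree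
`f = [κw : κv]` is finite, and `e * f ≤ [E : F]`. -/
theorem ramification_mul_residue_le_degree
    {F E Γ : Type*} [Field F] [Field E] [Algebra F E] [FiniteDimensional F E]
    [AddCommGroup Γ] [LinearOrder Γ] [IsOrderedAddMonoid Γ]
    (w : E → WithTop Γ)
    (hw_mul : ∀ x y : E, w (x * y) = w x + w y)
    (hw_add : ∀ x y : E, min (w x) (w y) ≤ w (x + y))
    (hw_one : w 1 = 0)
    (hw_zero : w 0 = ⊤)
    (hw_top : ∀ x : E, w x = ⊤ → x = 0)
    (Γw Γv : AddSubgroup Γ)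
    (hΓw : ∀ g : Γ, g ∈ Γw ↔ ∃ x : E, x ≠ 0 ∧ w x = (g : WithTop Γ))
    (hΓv : ∀ g : Γ, g ∈ Γv ↔ ∃ x : F, x ≠ 0 ∧ w (algebraMap F E x) = (g : WithTop Γ))
    (ow : Subring E) (how : ∀ x : E, x ∈ ow ↔ 0 ≤ w x)
    (ov : Subring F) (hov : ∀ x : F, x ∈ ov ↔ 0 ≤ w (algebraMap F E x))
    (mw : Ideal ow) (hmw : ∀ x : ow, x ∈ mw ↔ 0 < w (x : E))
    (mv : Ideal ov) (hmv : ∀ x : ov, x ∈ mv ↔ 0 < w (algebraMap F E (x : F)))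
    (j : ov ⧸ mv →+* ow ⧸ mw)
    (hj : ∀ (x : F) (hx : x ∈ ov),
      j (Ideal.Quotient.mk mv ⟨x, hx⟩) =
        Ideal.Quotient.mk mw ⟨algebraMap F E x, (how _).mpr ((hov x).mp hx)⟩) :
    letI : Module (ov ⧸ mv) (ow ⧸ mw) := j.toModule
    (Γv.addSubgroupOf Γw).index ≠ 0 ∧
    Module.Finite (ov ⧸ mv) (ow ⧸ mw) ∧
    (Γv.addSubgroupOf Γw).index * Module.finrank (ov ⧸ mv) (ow ⧸ mw) ≤
      Module.finrank F E := by
  classical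
  letI : Module (ov ⧸ mv) (ow ⧸ mw) := j.toModule
  set ψ := algebraMap F E with hψ
  have hψinj : Function.Injective ψ := (algebraMap F E).injective
  set d := Module.finrank F E with hd
  -- properness of the maximal ideals
  have hmvne : mv ≠ ⊤ := by
    intro h
    have h1 := (hmv 1).mp (h ▸ Submodule.mem_top)
    rw [OneMemClass.coe_one, map_one, hw_one] at h1
    exact lt_irrefl _ h1
  have hmwne : mw ≠ ⊤ := by
    intro h
    have h1 := (hmw 1).mp (h ▸ Submodule.mem_top)
    rw [OneMemClass.coe_one, hw_one] at h1
    exact lt_irrefl _ h1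
  haveI : Nontrivial (ov ⧸ mv) := Ideal.Quotient.nontrivial_iff.mpr hmvne
  haveI : Nontrivial (ow ⧸ mw) := Ideal.Quotient.nontrivial_iff.mpr hmwne
  -- mv is maximal, so the residue ring is a field
  have hunit : ∀ u : ov, u ∉ mv → IsUnit u := by
    intro u hu
    have h0 : w (ψ (u : F)) = 0 :=
      le_antisymm (not_lt.mp fun h => hu ((hmv u).mpr h)) ((hov _).mp u.2)
    have hu0 : (u : F) ≠ 0 := by
      intro h
      rw [h, map_zero, hw_zero] at h0
      exact (by simp : (⊤ : WithTop Γ) ≠ 0) h0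
    have hwinv : w (ψ (u : F)⁻¹) = 0 := by
      have : w (ψ (u : F)) + w (ψ (u : F)⁻¹) = 0 := by
        rw [← hw_mul, ← map_mul, mul_inv_cancel₀ hu0, map_one, hw_one]
      rwa [h0, zero_add] at this
    have hinv : (u : F)⁻¹ ∈ ov := (hov _).mpr (le_of_eq hwinv.symm)
    exact ⟨⟨u, ⟨(u : F)⁻¹, hinv⟩,
      Subtype.ext (mul_inv_cancel₀ hu0), Subtype.ext (inv_mul_cancel₀ hu0)⟩, rfl⟩
  haveI hmax : mv.IsMaximal := by
    rw [Ideal.isMaximal_iff]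
    refine ⟨fun h => hmvne (Ideal.eq_top_of_isUnit_mem mv h isUnit_one), ?_⟩
    intro J u hle hu huJ
    obtain ⟨u', hu'⟩ := (hunit u hu).exists_right_inv
    rw [← hu']
    exact J.mul_mem_right _ huJ
  letI : Field (ov ⧸ mv) := Ideal.Quotient.field mv
  have hjinj : Function.Injective j := j.injective
  have hsmul : ∀ (r : ov ⧸ mv) (y : ow ⧸ mw), r • y = j r * y := fun _ _ => rfl
  -- lifting linearly independent families in the residue field
  have bridge : ∀ {m' : ℕ} (y : Fin m' → ow ⧸ mw), LinearIndependent (ov ⧸ mv) y →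
      ∃ z : Fin m' → ow, (∀ k, Ideal.Quotient.mk mw (z k) = y k) ∧
        ∀ a : Fin m' → ov ⧸ mv,
          (∑ k, j (a k) * Ideal.Quotient.mk mw (z k)) = 0 → ∀ k, a k = 0 := by
    intro m' y hy
    choose z hzk using fun k => Ideal.Quotient.mk_surjective (I := mw) (y k)
    refine ⟨z, hzk, ?_⟩
    intro a hsum k
    refine Fintype.linearIndependent_iff.mp hy a ?_ k
    rw [← hsum]
    exact Finset.sum_congr rfl fun k _ => by rw [hsmul, hzk]
  -- lifting elements of the value group
  have liftΓ : ∀ g : Γw, ∃ x : E, x ≠ 0 ∧ w x = ((g : Γ) : WithTop Γ) :=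
    fun g => (hΓw g).mp g.2
  have hval : ∀ c : F, c ≠ 0 → ∃ γ : Γ, γ ∈ Γv ∧ w (ψ c) = (γ : WithTop Γ) := by
    intro c hc
    have hne : w (ψ c) ≠ ⊤ := fun h => hc (hψinj (by rw [map_zero]; exact hw_top _ h))
    obtain ⟨γ, hγ⟩ := WithTop.ne_top_iff_exists.mp hne
    exact ⟨γ, (hΓv γ).mpr ⟨c, hc, hγ.symm⟩, hγ.symm⟩
  -- distinct classes give the separation hypothesis of `mcl`
  have hxd_of : ∀ {n' : ℕ} (g : Fin n' → Γw),
      Function.Injective (fun i => (QuotientAddGroup.mk (g i) : Γw ⧸ Γv.addSubgroupOf Γw)) →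
      ∀ (x : Fin n' → E), (∀ i, w (x i) = ((g i : Γ) : WithTop Γ)) →
      ∀ i i' : Fin n', ∀ c : F, c ≠ 0 → w (x i) = w (x i') + w (ψ c) → i = i' := by
    intro n' g hinj x hxw i i' c hc heq
    obtain ⟨γ, hγv, hγ⟩ := hval c hc
    rw [hxw i, hxw i', hγ, ← WithTop.coe_add, WithTop.coe_inj] at heq
    apply hinj
    show (QuotientAddGroup.mk (g i) : Γw ⧸ Γv.addSubgroupOf Γw) = QuotientAddGroup.mk (g i')
    rw [QuotientAddGroup.eq]
    rw [AddSubgroup.mem_addSubgroupOf]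
    have : ((-(g i) + g i' : Γw) : Γ) = -γ := by
      push_cast
      rw [heq]
      abel
    rw [this]
    exact neg_mem hγv
  -- the quotient of value groups is finite
  have hfinQ : Finite (Γw ⧸ Γv.addSubgroupOf Γw) := by
    by_contra hinf
    rw [not_finite_iff_infinite] at hinf
    let emb := Infinite.natEmbedding (Γw ⧸ Γv.addSubgroupOf Γw)
    let q : Fin (d + 1) → Γw ⧸ Γv.addSubgroupOf Γw := fun i => emb i
    have hqinj : Function.Injective q := fun i i' h =>
      Fin.val_injective (emb.injective h)
    let g : Fin (d + 1) → Γw := fun i => (q i).out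
    have hgq : ∀ i, (QuotientAddGroup.mk (g i) : Γw ⧸ Γv.addSubgroupOf Γw) = q i :=
      fun i => QuotientAddGroup.out_eq' (q i)
    have hinj : Function.Injective
        (fun i => (QuotientAddGroup.mk (g i) : Γw ⧸ Γv.addSubgroupOf Γw)) := by
      intro i i' h
      apply hqinj
      rw [← hgq, ← hgq]
      exact h
    choose x hx0 hxw using fun i => liftΓ (g i)
    have hz1 : ∀ a : Fin 1 → ov ⧸ mv,
        (∑ k, j (a k) * Ideal.Quotient.mk mw ((fun _ => (1 : ow)) k)) = 0 →
        ∀ k, a k = 0 := by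
      intro a hsum k
      rw [Fin.sum_univ_one, map_one, mul_one] at hsum
      have := hjinj (by rw [hsum, map_zero] : j (a 0) = j 0)
      exact (Subsingleton.elim k 0) ▸ this
    have li := mcl w hw_mul hw_add hw_one hw_zero hw_top ow how ov hov mw hmw mv hmv j hj
      x hx0 (hxd_of g hinj x hxw) (fun _ => (1 : ow)) hz1
    have hcard := li.fintype_card_le_finrank
    rw [Fintype.card_prod, Fintype.card_fin, Fintype.card_fin] at hcard
    omega
  -- the residue extension is finite
  have hrank : Module.rank (ov ⧸ mv) (ow ⧸ mw) ≤ (d : Cardinal) := by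
    apply rank_le
    intro sfin hli
    let e := sfin.equivFin
    let y : Fin sfin.card → ow ⧸ mw := fun k => (e.symm k : ow ⧸ mw)
    have hyli : LinearIndependent (ov ⧸ mv) y := hli.comp e.symm e.symm.injective
    obtain ⟨z, hzk, hraw⟩ := bridge y hyli
    have li := mcl w hw_mul hw_add hw_one hw_zero hw_top ow how ov hov mw hmw mv hmv j hj
      (fun _ : Fin 1 => (1 : E)) (fun _ => one_ne_zero)
      (fun i i' _ _ _ => Subsingleton.elim i i') z hraw
    have hcard := li.fintype_card_le_finrank
    rw [Fintype.card_prod, Fintype.card_fin, Fintype.card_fin] at hcard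
    omega
  haveI hMF : Module.Finite (ov ⧸ mv) (ow ⧸ mw) := by
    rw [← Module.rank_lt_aleph0_iff]
    exact hrank.trans_lt (Cardinal.nat_lt_aleph0 d)
  refine ⟨AddSubgroup.index_ne_zero_of_finite, hMF, ?_⟩
  -- the fundamental inequality
  obtain ⟨e', ⟨eqv⟩⟩ := Finite.exists_equiv_fin (Γw ⧸ Γv.addSubgroupOf Γw)
  have hcardQ : (Γv.addSubgroupOf Γw).index = e' := Nat.card_eq_of_equiv_fin eqv
  let g : Fin e' → Γw := fun i => (eqv.symm i).out
  have hgq : ∀ i, (QuotientAddGroup.mk (g i) : Γw ⧸ Γv.addSubgroupOf Γw) = eqv.symm i :=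
    fun i => QuotientAddGroup.out_eq' (eqv.symm i)
  have hinj : Function.Injective
      (fun i => (QuotientAddGroup.mk (g i) : Γw ⧸ Γv.addSubgroupOf Γw)) := by
    intro i i' h
    apply eqv.symm.injective
    rw [← hgq, ← hgq]
    exact h
  choose x hx0 hxw using fun i => liftΓ (g i)
  let bas := Module.finBasis (ov ⧸ mv) (ow ⧸ mw)
  obtain ⟨z, hzk, hraw⟩ := bridge (fun k => bas k) bas.linearIndependent
  have li := mcl w hw_mul hw_add hw_one hw_zero hw_top ow how ov hov mw hmw mv hmv j hj
    x hx0 (hxd_of g hinj x hxw) z hraw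
  have hcard := li.fintype_card_le_finrank
  rw [Fintype.card_prod, Fintype.card_fin, Fintype.card_fin] at hcard
  rw [hcardQ]
  exact hcard
end

section
/- Let E/F be a finite extension of fields, let w be a valuation on E with values in a totally ordered abelian group Γ, and let v be the restriction of w to F. Then rank(Γ_w) = rank(Γ_v) and ratrank(Γ_w) = ratrank(Γ_v), where Γ_v and Γ_w are the value groups of v and w respectively. -/
open scoped TensorProduct

/-- The *rational rank* of an abelian group: the dimension of the `ℚ`-vector space
`Γ ⊗_ℤ ℚ`. -/
noncomputable def ratrank (Γ : Type*) [AddCommGroup Γ] : Cardinal :=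
  Module.rank ℚ (ℚ ⊗[ℤ] Γ)

section Aux

variable {G : Type*} [AddCommGroup G] [LinearOrder G] [IsOrderedAddMonoid G]

theorem aux_le_nsmul_self {a : G} {n : ℕ} (h0 : 0 ≤ a) (hn : 0 < n) : a ≤ n • a := by
  calc a = 1 • a := (one_nsmul a).symm
  _ ≤ n • a := nsmul_le_nsmul_left h0 hn

/-- If an isolated subgroup contains `n • g` with `n > 0`, it contains `g`. -/
theorem aux_mem_of_nsmul_mem {Δ : AddSubgroup G} (hΔ : IsIsolated Δ) {g : G} {n : ℕ}
    (hn : 0 < n) (h : n • g ∈ Δ) : g ∈ Δ := by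
  rcases le_total 0 g with hg | hg
  · exact hΔ.2 _ h g hg (aux_le_nsmul_self hg hn)
  · have hneg : n • (-g) ∈ Δ := by rw [smul_neg]; exact Δ.neg_mem h
    have : -g ∈ Δ := hΔ.2 _ hneg (-g) (neg_nonneg.mpr hg)
      (aux_le_nsmul_self (neg_nonneg.mpr hg) hn)
    simpa using Δ.neg_mem this

variable {Γ : Type*} [AddCommGroup Γ] [LinearOrder Γ] [IsOrderedAddMonoid Γ]

/-- The saturation of a subgroup of `B` inside `A`. -/
def satSub {A B : AddSubgroup Γ} (_hle : B ≤ A) (Δ' : AddSubgroup ↥B) : AddSubgroup ↥A where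
  carrier := {g | ∃ n : ℕ, 0 < n ∧ ∃ x ∈ Δ', (x : Γ) = n • (g : Γ)}
  zero_mem' := ⟨1, one_pos, 0, Δ'.zero_mem, by simp⟩
  add_mem' := by
    rintro g h ⟨n, hn, x, hx, hxe⟩ ⟨m, hm, y, hy, hye⟩
    refine ⟨n * m, Nat.mul_pos hn hm, m • x + n • y,
      Δ'.add_mem (Δ'.nsmul_mem hx m) (Δ'.nsmul_mem hy n), ?_⟩
    push_cast
    rw [hxe, hye, smul_add]
    rw [smul_smul, smul_smul, mul_comm m n]
  neg_mem' := by
    rintro g ⟨n, hn, x, hx, hxe⟩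
    refine ⟨n, hn, -x, Δ'.neg_mem hx, ?_⟩
    push_cast
    rw [hxe, smul_neg]

theorem rank_eq_of_torsion {A B : AddSubgroup Γ} (hle : B ≤ A)
    (htor : ∀ g ∈ A, ∃ n : ℕ, 0 < n ∧ n • g ∈ B) :
    rankOrdGroup ↥A = rankOrdGroup ↥B := by
  refine Cardinal.mk_congr ?_
  set ι := AddSubgroup.inclusion hle with hι
  have hcoe : ∀ x : ↥B, ((ι x : ↥A) : Γ) = ((x : Γ) : Γ) := fun x => rfl
  -- forward: intersect with B ; backward: saturate
  have comap_isolated : ∀ Δ : AddSubgroup ↥A, IsIsolated Δ → IsIsolated (Δ.comap ι) := by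
    intro Δ hΔ
    constructor
    · intro htop
      apply hΔ.1
      rw [AddSubgroup.eq_top_iff']
      intro g
      obtain ⟨n, hn, hB⟩ := htor (g : Γ) g.2
      have hx : ι ⟨n • (g : Γ), hB⟩ ∈ Δ := by
        rw [AddSubgroup.eq_top_iff'] at htop
        exact htop _
      have : ι ⟨n • (g : Γ), hB⟩ = n • g := by
        apply Subtype.ext
        rw [hcoe]
        push_cast
        rfl
      rw [this] at hx
      exact aux_mem_of_nsmul_mem hΔ hn hx
    · intro α hα β h0 hβα
      refine AddSubgroup.mem_comap.mpr (hΔ.2 _ (AddSubgroup.mem_comap.mp hα) (ι β) ?_ ?_)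
      · rw [← Subtype.coe_le_coe] at h0 ⊢
        exact h0
      · rw [← Subtype.coe_le_coe]
        rw [← Subtype.coe_le_coe] at hβα
        exact hβα
  have sat_isolated : ∀ Δ' : AddSubgroup ↥B, IsIsolated Δ' → IsIsolated (satSub hle Δ') := by
    intro Δ' hΔ'
    constructor
    · intro htop
      apply hΔ'.1
      rw [AddSubgroup.eq_top_iff']
      intro γ
      have : ι γ ∈ satSub hle Δ' := by rw [htop]; trivial
      obtain ⟨n, hn, x, hx, hxe⟩ := this
      rw [hcoe] at hxe
      have hx' : x = n • γ := by
        apply Subtype.ext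
        rw [hxe]
        push_cast
        rfl
      rw [hx'] at hx
      exact aux_mem_of_nsmul_mem hΔ' hn hx
    · rintro α ⟨n, hn, x, hx, hxe⟩ β h0 hβα
      obtain ⟨m, hm, hmB⟩ := htor (β : Γ) β.2
      set b : ↥B := ⟨m • (β : Γ), hmB⟩ with hb
      have hnb : n • b ∈ Δ' := by
        apply hΔ'.2 (m • x) (Δ'.nsmul_mem hx m) _ _ _
        · rw [← Subtype.coe_le_coe]
          push_cast
          exact nsmul_nonneg (nsmul_nonneg (by exact_mod_cast h0) m) n
        · rw [← Subtype.coe_le_coe]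
          push_cast
          rw [hxe, smul_comm m n]
          apply nsmul_le_nsmul_right
          apply nsmul_le_nsmul_right
          exact_mod_cast hβα
      exact ⟨n * m, Nat.mul_pos hn hm, n • b, hnb, by push_cast; rw [smul_smul]⟩
  refine ⟨fun Δ => ⟨AddSubgroup.comap ι Δ.1, comap_isolated _ Δ.2⟩,
    fun Δ' => ⟨satSub hle Δ'.1, sat_isolated _ Δ'.2⟩, ?_, ?_⟩
  · rintro ⟨Δ, hΔ⟩
    refine Subtype.ext ?_
    ext g
    constructor
    · rintro ⟨n, hn, x, hx, hxe⟩
      have : ι x = n • g := by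
        apply Subtype.ext
        rw [hcoe, hxe]
        push_cast
        rfl
      rw [AddSubgroup.mem_comap, this] at hx
      exact aux_mem_of_nsmul_mem hΔ hn hx
    · intro hg
      obtain ⟨n, hn, hB⟩ := htor (g : Γ) g.2
      refine ⟨n, hn, ⟨n • (g : Γ), hB⟩, ?_, rfl⟩
      rw [AddSubgroup.mem_comap]
      have : ι ⟨n • (g : Γ), hB⟩ = n • g := by
        apply Subtype.ext
        rw [hcoe]
        push_cast
        rfl
      rw [this]
      exact Δ.nsmul_mem hg n
  · rintro ⟨Δ', hΔ'⟩
    refine Subtype.ext ?_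
    ext γ
    constructor
    · intro hγ
      obtain ⟨n, hn, x, hx, hxe⟩ := AddSubgroup.mem_comap.mp hγ
      rw [hcoe] at hxe
      have : x = n • γ := by
        apply Subtype.ext
        rw [hxe]
        push_cast
        rfl
      rw [this] at hx
      exact aux_mem_of_nsmul_mem hΔ' hn hx
    · intro hγ
      exact AddSubgroup.mem_comap.mpr ⟨1, one_pos, γ, hγ, by rw [hcoe]; rw [one_smul]⟩

theorem ratrank_eq_of_torsion {A B : AddSubgroup Γ} (hle : B ≤ A)
    (htor : ∀ g ∈ A, ∃ n : ℕ, 0 < n ∧ n • g ∈ B) :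
    ratrank ↥A = ratrank ↥B := by
  have : Module.Flat ℤ ℚ := IsLocalization.flat ℚ (nonZeroDivisors ℤ)
  set ι := (AddSubgroup.inclusion hle).toIntLinearMap with hι
  set f := LinearMap.baseChange ℚ ι with hf
  have hinj : Function.Injective f := by
    rw [hf, LinearMap.baseChange_eq_ltensor]
    exact Module.Flat.lTensor_preserves_injective_linearMap ι
      (AddSubgroup.inclusion_injective hle)
  have hsurj : Function.Surjective f := by
    intro z
    induction z using TensorProduct.induction_on with
    | zero => exact ⟨0, map_zero f⟩
    | tmul q g =>
      obtain ⟨n, hn, hB⟩ := htor (g : Γ) g.2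
      refine ⟨(q / n) ⊗ₜ ⟨n • (g : Γ), hB⟩, ?_⟩
      rw [hf, LinearMap.baseChange_tmul]
      have h1 : ι ⟨n • (g : Γ), hB⟩ = (n : ℤ) • g := by
        apply Subtype.ext
        show n • (g : Γ) = (((n : ℤ) • g : ↥A) : Γ)
        push_cast
        rw [natCast_zsmul]
      rw [h1, TensorProduct.tmul_smul, TensorProduct.smul_tmul', zsmul_eq_mul]
      congr 1
      push_cast
      field_simp
    | add x y hx hy =>
      obtain ⟨a, ha⟩ := hx
      obtain ⟨b, hb⟩ := hy
      exact ⟨a + b, by rw [map_add, ha, hb]⟩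
  exact ((LinearEquiv.ofBijective f ⟨hinj, hsurj⟩).rank_eq).symm

end Aux

section ValAux

variable {E Γ : Type*} [Field E] [AddCommGroup Γ] [LinearOrder Γ] [IsOrderedAddMonoid Γ] {w : E → WithTop Γ}

theorem aux_w_sum (hw_add : ∀ x y : E, min (w x) (w y) ≤ w (x + y)) (hw_zero : w 0 = ⊤)
    {ι : Type*} (s : Finset ι) (f : ι → E) :
    s.inf (fun i => w (f i)) ≤ w (∑ i ∈ s, f i) := by
  classical
  induction s using Finset.induction_on with
  | empty => simp [hw_zero]
  | insert _ _ h ih =>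
    rename_i a t
    rw [Finset.sum_insert h, Finset.inf_insert]
    exact le_trans (inf_le_inf_left _ ih) (hw_add _ _)

theorem aux_w_neg (hw_mul : ∀ x y : E, w (x * y) = w x + w y) (hw_one : w 1 = 0)
    (hw_top : ∀ x : E, w x = ⊤ → x = 0) (x : E) : w (-x) = w x := by
  have h1 : w (-1 : E) = 0 := by
    have h2 := hw_mul (-1) (-1)
    rw [neg_mul_neg, one_mul, hw_one] at h2
    cases h : w (-1 : E) with
    | top => exact absurd (hw_top _ h) (by norm_num)
    | coe a =>
      rw [h, ← WithTop.coe_add, eq_comm, ← WithTop.coe_zero, WithTop.coe_eq_coe] at h2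
      have ha : a = 0 := by
        rcases le_total a 0 with hle | hle
        · have : a = -a := eq_neg_of_add_eq_zero_left h2
          exact le_antisymm hle (this ▸ neg_nonneg.mpr hle)
        · have : a = -a := eq_neg_of_add_eq_zero_left h2
          exact le_antisymm (this ▸ neg_nonpos.mpr hle) hle
      rw [ha, WithTop.coe_zero]
  rw [show -x = -1 * x by ring, hw_mul, h1, zero_add]

theorem aux_two_eq (hw_mul : ∀ x y : E, w (x * y) = w x + w y)
    (hw_add : ∀ x y : E, min (w x) (w y) ≤ w (x + y)) (hw_one : w 1 = 0)
    (hw_zero : w 0 = ⊤) (hw_top : ∀ x : E, w x = ⊤ → x = 0)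
    {ι : Type*} (s : Finset ι) (f : ι → E) (hsum : ∑ i ∈ s, f i = 0)
    {i0 : ι} (hi0 : i0 ∈ s) (hne : f i0 ≠ 0) :
    ∃ i ∈ s, ∃ j ∈ s, i ≠ j ∧ w (f i) = w (f j) ∧ w (f i) ≠ ⊤ := by
  classical
  obtain ⟨i, hi, hmin⟩ := s.exists_min_image (fun i => w (f i)) ⟨i0, hi0⟩
  have hitop : w (f i) ≠ ⊤ := by
    intro h
    exact hne (hw_top _ (top_le_iff.mp (h ▸ hmin i0 hi0)))
  by_contra hcon
  push_neg at hcon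
  have hgt : ∀ j ∈ s.erase i, w (f i) < w (f j) := by
    intro j hj
    obtain ⟨hji, hjs⟩ := Finset.mem_erase.mp hj
    rcases lt_or_eq_of_le (hmin j hjs) with h | h
    · exact h
    · exact absurd (hcon i hi j hjs (Ne.symm hji) h) hitop
  have hlt : w (f i) < (s.erase i).inf (fun j => w (f j)) := by
    rw [Finset.lt_inf_iff (lt_of_le_of_ne le_top hitop)]
    exact hgt
  have hle2 := aux_w_sum hw_add hw_zero (s.erase i) f
  have hsum2 : ∑ j ∈ s.erase i, f j = -f i := by
    have := Finset.sum_erase_add s f hi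
    rw [hsum] at this
    linear_combination this
  rw [hsum2, aux_w_neg hw_mul hw_one hw_top] at hle2
  exact absurd (lt_of_lt_of_le hlt hle2) (lt_irrefl _)

end ValAux

/-- If `E/F` is a finite extension of fields, `w` an (additive) valuation on `E` with
values in a totally ordered abelian group `Γ`, and `v` the restriction of `w` to `F`,
then the value groups `Γw = w(E \ {0})` and `Γv = v(F \ {0})` have the same rank and the
same rational rank. -/
theorem rank_ratrank_eq_of_finite_extension
    {F E Γ : Type*} [Field F] [Field E] [Algebra F E] [FiniteDimensional F E]
    [AddCommGroup Γ] [LinearOrder Γ] [IsOrderedAddMonoid Γ]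
    (w : E → WithTop Γ)
    (hw_mul : ∀ x y : E, w (x * y) = w x + w y)
    (hw_add : ∀ x y : E, min (w x) (w y) ≤ w (x + y))
    (hw_one : w 1 = 0)
    (hw_zero : w 0 = ⊤)
    (hw_top : ∀ x : E, w x = ⊤ → x = 0)
    (Γw Γv : AddSubgroup Γ)
    (hΓw : ∀ g : Γ, g ∈ Γw ↔ ∃ x : E, x ≠ 0 ∧ w x = (g : WithTop Γ))
    (hΓv : ∀ g : Γ, g ∈ Γv ↔ ∃ x : F, x ≠ 0 ∧ w (algebraMap F E x) = (g : WithTop Γ)) :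
    rankOrdGroup Γw = rankOrdGroup Γv ∧ ratrank Γw = ratrank Γv := by
  classical
  have halg : Function.Injective (algebraMap F E) := (algebraMap F E).injective
  have hle : Γv ≤ Γw := by
    intro g hg
    obtain ⟨x, hx, hxe⟩ := (hΓv g).mp hg
    refine (hΓw g).mpr ⟨algebraMap F E x, ?_, hxe⟩
    intro h
    exact hx (halg (by rw [h, map_zero]))
  -- torsion
  have htor : ∀ g ∈ Γw, ∃ n : ℕ, 0 < n ∧ n • g ∈ Γv := by
    intro g hg
    obtain ⟨x, hx0, hxw⟩ := (hΓw g).mp hg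
    set d := Module.finrank F E with hd
    have hnli : ¬ LinearIndependent F (fun i : Fin (d + 1) => x ^ (i : ℕ)) := by
      intro h
      have := h.fintype_card_le_finrank
      simp only [Fintype.card_fin] at this
      omega
    obtain ⟨c, hc, i1, hi1⟩ := Fintype.not_linearIndependent_iff.mp hnli
    have hsum : ∑ i : Fin (d + 1), algebraMap F E (c i) * x ^ (i : ℕ) = 0 := by
      rw [← hc]
      exact Finset.sum_congr rfl fun i _ => (Algebra.smul_def _ _).symm
    have hne : algebraMap F E (c i1) * x ^ (i1 : ℕ) ≠ 0 := by
      apply mul_ne_zero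
      · intro h
        exact hi1 (halg (by rw [h, map_zero]))
      · exact pow_ne_zero _ hx0
    obtain ⟨i, -, j, -, hij, heq, htop'⟩ := aux_two_eq hw_mul hw_add hw_one hw_zero hw_top
      Finset.univ (fun i : Fin (d + 1) => algebraMap F E (c i) * x ^ (i : ℕ))
      hsum (Finset.mem_univ i1) hne
    -- values of powers
    have hpow : ∀ k : ℕ, w (x ^ k) = ((k • g : Γ) : WithTop Γ) := by
      intro k
      induction k with
      | zero => simp [hw_one]
      | succ k ih => rw [pow_succ, hw_mul, ih, hxw, ← WithTop.coe_add, succ_nsmul]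
    -- coefficient values
    have hterm : ∀ k : Fin (d + 1), w (algebraMap F E (c k) * x ^ (k : ℕ)) ≠ ⊤ →
        ∃ a : Γ, a ∈ Γv ∧ w (algebraMap F E (c k) * x ^ (k : ℕ)) = ((a + (k : ℕ) • g : Γ) : WithTop Γ) := by
      intro k hk
      have hck : c k ≠ 0 := by
        intro h
        apply hk
        rw [h, map_zero, zero_mul, hw_zero]
      have hwa : w (algebraMap F E (c k)) ≠ ⊤ := by
        intro h
        exact (fun h' => hck (halg (by rw [h', map_zero]))) (hw_top _ h)
      obtain ⟨a, ha⟩ := WithTop.ne_top_iff_exists.mp hwa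
      refine ⟨a, (hΓv a).mpr ⟨c k, hck, ha.symm⟩, ?_⟩
      rw [hw_mul, ← ha, hpow, ← WithTop.coe_add]
    have hjtop : w (algebraMap F E (c j) * x ^ (j : ℕ)) ≠ ⊤ := heq ▸ htop'
    obtain ⟨a, ha, hae⟩ := hterm i htop'
    obtain ⟨b, hb, hbe⟩ := hterm j hjtop
    rw [hae, hbe, WithTop.coe_eq_coe] at heq
    -- a + i•g = b + j•g
    have hijne : (i : ℕ) ≠ (j : ℕ) := fun h => hij (Fin.val_injective h)
    rcases lt_or_gt_of_ne hijne with hlt | hlt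
    · refine ⟨(j : ℕ) - (i : ℕ), by omega, ?_⟩
      have : ((j : ℕ) - (i : ℕ)) • g = a - b := by
        have hj : (j : ℕ) = (i : ℕ) + ((j : ℕ) - (i : ℕ)) := by omega
        rw [hj, add_nsmul] at heq
        have h3 : a + (i : ℕ) • g = (b + ((j : ℕ) - (i : ℕ)) • g) + (i : ℕ) • g := by
          rw [heq]; abel
        have h4 : a = b + ((j : ℕ) - (i : ℕ)) • g := add_right_cancel h3
        rw [h4]; abel
      rw [this]
      exact Γv.sub_mem ha hb
    · refine ⟨(i : ℕ) - (j : ℕ), by omega, ?_⟩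
      have : ((i : ℕ) - (j : ℕ)) • g = b - a := by
        have hi : (i : ℕ) = (j : ℕ) + ((i : ℕ) - (j : ℕ)) := by omega
        rw [hi, add_nsmul] at heq
        have h3 : (a + ((i : ℕ) - (j : ℕ)) • g) + (j : ℕ) • g = b + (j : ℕ) • g := by
          rw [← heq]; abel
        have h4 : b = a + ((i : ℕ) - (j : ℕ)) • g := (add_right_cancel h3).symm
        rw [h4]; abel
      rw [this]
      exact Γv.sub_mem hb ha
  exact ⟨rank_eq_of_torsion hle htor, ratrank_eq_of_torsion hle htor⟩
end

section
/- Let F be a field and R a subring of F. To each valuation subring A of F associate the function f_A : F → {0, +, −} defined by: f_A(x) = + if x lies in the maximal ideal m_A of A, f_A(x) = 0 if x is a unit of A, and f_A(x) = − if x ∉ A. Then the set S_{F/R} = { f_A : A is a valuation subring of F with R ⊆ A } is a closed subset of the space of all functions F → {0,+,−} equipped with the product topology arising from the discrete topology on the three-element set {0,+,−}; consequently S_{F/R} is compact in this (patch) topology. -/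
/-- The three-element set `{0, +, −}`. -/
inductive Tri : Type
  | zero : Tri
  | plus : Tri
  | minus : Tri
  deriving DecidableEq

instance : TopologicalSpace Tri := ⊥

instance : DiscreteTopology Tri := ⟨rfl⟩

open scoped Classical in
/-- The sign function `f_A : F → {0, +, −}` attached to a valuation subring `A` of a
field `F`: it sends `x` to `−` if `x ∉ A`, to `+` if `x` lies in the maximal ideal of `A`
(i.e. `x ∈ A` and `x` is not a unit of `A`), and to `0` if `x` is a unit of `A`. -/
noncomputable def signOf {F : Type*} [Field F] (A : ValuationSubring F) (x : F) : Tri :=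
  if hx : x ∈ A then
    (if IsUnit (⟨x, hx⟩ : A) then Tri.zero else Tri.plus)
  else Tri.minus

/-! A function `f : F → {0, +, −}` is some `f_A` with `R ⊆ A` exactly when
`A_f = {x | f x ≠ −}` is a valuation subring containing `R` and `f` takes the value `0`
exactly on the units of `A_f`. Each of these conditions constrains at most three values of `f`,
hence cuts out a closed set of the product space, which is compact by Tychonoff. -/

instance : Fintype Tri :=
  ⟨{.zero, .plus, .minus}, fun t => by cases t <;> simp⟩

theorem Tri.eq_iff {s t : Tri} :
    s = t ↔ (s ≠ .minus ↔ t ≠ .minus) ∧ (s = .zero ↔ t = .zero) := by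
  cases s <;> cases t <;> simp

theorem isClosed_setOf_apply₃ {ι X : Type*} [TopologicalSpace X] [DiscreteTopology X]
    (x y z : ι) (p : X → X → X → Prop) : IsClosed {f : ι → X | p (f x) (f y) (f z)} :=
  (isClosed_discrete {t : X × X × X | p t.1 t.2.1 t.2.2}).preimage
    (f := fun f : ι → X => (f x, f y, f z)) (by fun_prop)

section

variable {F : Type*} [Field F]

theorem signOf_ne_minus_iff (A : ValuationSubring F) (x : F) :
    signOf A x ≠ .minus ↔ x ∈ A := by
  unfold signOf
  split_ifs <;> simp_all

theorem signOf_eq_zero_iff (A : ValuationSubring F) (x : F) :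
    signOf A x = .zero ↔ x ∈ A ∧ x ≠ 0 ∧ x⁻¹ ∈ A := by
  unfold signOf
  split_ifs with hx hunit
  · simpa [hx] using Submonoid.isUnit_iff_and.mp hunit
  · simpa [hx] using mt Submonoid.isUnit_iff_and.mpr hunit
  · simp [hx]

def IsValuationSign (R : Subring F) (f : F → Tri) : Prop :=
  (∀ x y, f x ≠ .minus → f y ≠ .minus → f (x + y) ≠ .minus) ∧
  (∀ x y, f x ≠ .minus → f y ≠ .minus → f (x * y) ≠ .minus) ∧
  (∀ x, f x ≠ .minus → f (-x) ≠ .minus) ∧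
  (∀ x, f x ≠ .minus ∨ f x⁻¹ ≠ .minus) ∧
  (∀ r : R, f r ≠ .minus) ∧
  (∀ x, f x = .zero ↔ f x ≠ .minus ∧ x ≠ 0 ∧ f x⁻¹ ≠ .minus)

theorem isClosed_setOf_isValuationSign (R : Subring F) :
    IsClosed {f : F → Tri | IsValuationSign R f} := by
  simp only [IsValuationSign, Set.ofPred_and, Set.ofPred_forall]
  refine .inter ?_ (.inter ?_ (.inter ?_ (.inter ?_ (.inter ?_ ?_)))) <;>
    refine isClosed_iInter fun x => ?_
  · exact isClosed_iInter fun y => isClosed_setOf_apply₃ x y (x + y) fun a b c : Tri =>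
      a ≠ .minus → b ≠ .minus → c ≠ .minus
  · exact isClosed_iInter fun y => isClosed_setOf_apply₃ x y (x * y) fun a b c : Tri =>
      a ≠ .minus → b ≠ .minus → c ≠ .minus
  · exact isClosed_setOf_apply₃ x (-x) x fun a b (_ : Tri) => a ≠ .minus → b ≠ .minus
  · exact isClosed_setOf_apply₃ x x⁻¹ x fun a b (_ : Tri) => a ≠ .minus ∨ b ≠ .minus
  · exact isClosed_setOf_apply₃ (x : F) x x fun (a _ _ : Tri) => a ≠ .minus
  · exact isClosed_setOf_apply₃ x x⁻¹ x fun a b (_ : Tri) =>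
      a = .zero ↔ a ≠ .minus ∧ x ≠ 0 ∧ b ≠ .minus

theorem isValuationSign_signOf {R : Subring F} {A : ValuationSubring F} (hRA : R ≤ A.toSubring) :
    IsValuationSign R (signOf A) := by
  simp only [IsValuationSign, signOf_ne_minus_iff, signOf_eq_zero_iff]
  exact ⟨A.add_mem, A.mul_mem, A.neg_mem, A.mem_or_inv_mem,
    fun r => hRA r.2, fun _ => trivial⟩

def IsValuationSign.valuationSubring {R : Subring F} {f : F → Tri} (hf : IsValuationSign R f) :
    ValuationSubring F where
  carrier := {x | f x ≠ .minus}
  add_mem' := hf.1 _ _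
  mul_mem' := hf.2.1 _ _
  neg_mem' := hf.2.2.1 _
  mem_or_inv_mem' := hf.2.2.2.1
  zero_mem' := hf.2.2.2.2.1 0
  one_mem' := hf.2.2.2.2.1 1

theorem IsValuationSign.le_valuationSubring {R : Subring F} {f : F → Tri}
    (hf : IsValuationSign R f) : R ≤ hf.valuationSubring.toSubring :=
  fun r hr => hf.2.2.2.2.1 ⟨r, hr⟩

theorem IsValuationSign.signOf_valuationSubring {R : Subring F} {f : F → Tri}
    (hf : IsValuationSign R f) : signOf hf.valuationSubring = f := by
  funext x
  rw [Tri.eq_iff, signOf_ne_minus_iff, signOf_eq_zero_iff]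
  exact ⟨Iff.rfl, (hf.2.2.2.2.2 x).symm⟩

theorem isValuationSign_iff {R : Subring F} {f : F → Tri} :
    IsValuationSign R f ↔ ∃ A : ValuationSubring F, R ≤ A.toSubring ∧ f = signOf A where
  mp hf := ⟨hf.valuationSubring, hf.le_valuationSubring, hf.signOf_valuationSubring.symm⟩
  mpr := fun ⟨_, hRA, hf⟩ => hf ▸ isValuationSign_signOf hRA

end

/-- For a field `F` and a subring `R` of `F`, the set
`S_{F/R} = {f_A : A a valuation subring of F containing R}` of sign functions is a closed,
hence compact, subset of the space of all functions `F → {0, +, −}` with the product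
(patch) topology coming from the discrete topology on `{0, +, −}`. -/
theorem riemannZariski_patch_closed_compact
    {F : Type*} [Field F] (R : Subring F) :
    IsClosed {f : F → Tri | ∃ A : ValuationSubring F, R ≤ A.toSubring ∧ f = signOf A} ∧
    IsCompact {f : F → Tri | ∃ A : ValuationSubring F, R ≤ A.toSubring ∧ f = signOf A} := by
  have hclosed := isClosed_setOf_isValuationSign R
  simp only [isValuationSign_iff] at hclosed
  exact ⟨hclosed, hclosed.isCompact⟩
end

section
/- Let F be a field and R a subring of F. Let S_{F/R} be the set of valuation subrings of F containing R, equipped with the Zariski topology, namely the topology generated by the sets {A ∈ S_{F/R} : x ∈ A} for x ∈ F. Then S_{F/R} is quasicompact: every open cover of S_{F/R} has a finite subcover. -/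
/-!
Every ultrafilter `𝒰` on `S_{F/R}` converges: the elements of `F` lying in `𝒰`-almost every
`A` form a subring containing `R`, and since `𝒰` is ultra, the dichotomy "`x ∈ A` or `x⁻¹ ∈ A`"
passes to it, so it is a valuation subring. Each basic open set containing this limit is then
in `𝒰` by construction.
-/

open Filter

namespace ValuationSubring

variable {F : Type*} [Field F]

def ultrafilterLimit (𝒰 : Ultrafilter (ValuationSubring F)) : ValuationSubring F where
  carrier := {x | ∀ᶠ A in (𝒰 : Filter (ValuationSubring F)), x ∈ A}
  zero_mem' := .of_forall fun A => zero_mem A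
  one_mem' := .of_forall fun A => one_mem A
  add_mem' {_ _} hx hy := by
    simp only [Set.mem_ofPred_eq] at hx hy ⊢
    exact (hx.and hy).mono fun A h => A.add_mem _ _ h.1 h.2
  mul_mem' {_ _} hx hy := by
    simp only [Set.mem_ofPred_eq] at hx hy ⊢
    exact (hx.and hy).mono fun A h => A.mul_mem _ _ h.1 h.2
  neg_mem' {_} hx := by
    simp only [Set.mem_ofPred_eq] at hx ⊢
    exact hx.mono fun A h => A.neg_mem _ h
  mem_or_inv_mem' x :=
    Ultrafilter.eventually_or.mp (.of_forall fun A : ValuationSubring F => A.mem_or_inv_mem x)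

@[simp]
theorem mem_ultrafilterLimit {𝒰 : Ultrafilter (ValuationSubring F)} {x : F} :
    x ∈ ultrafilterLimit 𝒰 ↔ ∀ᶠ A in (𝒰 : Filter (ValuationSubring F)), x ∈ A := by
  rfl

theorem le_ultrafilterLimit {R : Subring F} {𝒰 : Ultrafilter (ValuationSubring F)}
    (h : ∀ᶠ A in (𝒰 : Filter (ValuationSubring F)), R ≤ A.toSubring) :
    R ≤ (ultrafilterLimit 𝒰).toSubring :=
  fun _ hr => mem_ultrafilterLimit.mpr (h.mono fun _ hA => hA hr)

end ValuationSubring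

/-- The Riemann-Zariski space `S_{F/R}` of valuation subrings of a field `F` containing a
subring `R`, endowed with the Zariski topology (generated by the sets
`{A : x ∈ A}` for `x ∈ F`), is quasicompact. -/
theorem riemannZariski_zariski_quasicompact
    {F : Type*} [Field F] (R : Subring F) :
    @CompactSpace {A : ValuationSubring F // R ≤ A.toSubring}
      (TopologicalSpace.generateFrom
        {U | ∃ x : F, U = {A : {A : ValuationSubring F // R ≤ A.toSubring} |
          x ∈ (A : ValuationSubring F)}}) := by
  let := TopologicalSpace.generateFrom
    {U | ∃ x : F, U = {A : {A : ValuationSubring F // R ≤ A.toSubring} |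
      x ∈ (A : ValuationSubring F)}}
  refine ⟨isCompact_iff_ultrafilter_le_nhds.mpr fun 𝒰 _ => ?_⟩
  let A₀ := ValuationSubring.ultrafilterLimit (𝒰.map Subtype.val)
  have hRA₀ : R ≤ A₀.toSubring :=
    ValuationSubring.le_ultrafilterLimit (eventually_map.mpr (.of_forall fun A => A.2))
  refine ⟨⟨A₀, hRA₀⟩, Set.mem_univ _, ?_⟩
  rw [← tendsto_id', TopologicalSpace.tendsto_nhds_generateFrom_iff]
  rintro _ ⟨x, rfl⟩ hx
  exact ValuationSubring.mem_ultrafilterLimit.mp hx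
end

section
/- Let k be a field, let X be an integral scheme that is proper over k, with function field K, and let A be a valuation subring of K containing the image of k. Then A is centered on X: there exists a point x ∈ X such that A dominates the local ring O_{X,x}. -/
open AlgebraicGeometry CategoryTheory

instance {X : Scheme} [Nonempty X] : Nonempty (⊤ : X.Opens) :=
  ⟨⟨Nonempty.some inferInstance, trivial⟩⟩

/-- The canonical ring homomorphism from the base ring `k` to the function field of an
integral scheme `X` equipped with a structure morphism `f : X ⟶ Spec k`. -/
noncomputable def structureMapToFunctionField (k : Type*) [CommRing k] (X : Scheme)
    [IsIntegral X] (f : X ⟶ Spec (CommRingCat.of k)) :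
    CommRingCat.of k ⟶ X.functionField :=
  (Scheme.ΓSpecIso (CommRingCat.of k)).inv ≫ f.appTop ≫ (X.germToFunctionField ⊤)

/-- `A` *dominates* the local ring `O_{X,x}`. -/
def DominatesStalk (X : Scheme) [IsIntegral X]
    (A : ValuationSubring X.functionField) (x : X) : Prop :=
  ∃ h : ∀ g : X.presheaf.stalk x,
      algebraMap (X.presheaf.stalk x) X.functionField g ∈ A,
    ∀ g : X.presheaf.stalk x, ¬ IsUnit g →
      (⟨algebraMap (X.presheaf.stalk x) X.functionField g, h g⟩ : A) ∈
        IsLocalRing.maximalIdeal A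

/-- Two morphisms to an affine scheme agreeing on global sections are equal. -/
lemma hom_ext_of_appTop {T : Scheme} {R : CommRingCat} (g₁ g₂ : T ⟶ Spec R)
    (h : g₁.appTop = g₂.appTop) : g₁ = g₂ := by
  have h₁ := Scheme.toSpecΓ_naturality g₁
  have h₂ := Scheme.toSpecΓ_naturality g₂
  have e : g₁ ≫ (Spec R).toSpecΓ = g₂ ≫ (Spec R).toSpecΓ := by rw [h₁, h₂, h]
  have : IsIso (Spec R).toSpecΓ := by
    rw [← SpecMap_ΓSpecIso_hom]; infer_instance
  exact (cancel_mono _).mp e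

set_option synthInstance.maxHeartbeats 800000 in
set_option maxHeartbeats 1600000 in
/-- Let `k` be a field, `X` an integral scheme proper over `k` with function field `K`,
and `A` a valuation subring of `K` containing the image of `k`.  Then `A` is centered on
`X`: there is a point `x ∈ X` such that `A` dominates the local ring `O_{X,x}`. -/
theorem exists_center_of_proper (k : Type*) [Field k] (X : Scheme) [IsIntegral X]
    (f : X ⟶ Spec (CommRingCat.of k)) [IsProper f]
    (A : ValuationSubring X.functionField)
    (hk : ∀ a : k, structureMapToFunctionField k X f a ∈ A) :
    ∃ x : X, DominatesStalk X A x := by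
  have hVC : ValuativeCriterion f := by
    have h : (ValuativeCriterion ⊓ @QuasiCompact ⊓ @QuasiSeparated ⊓ @LocallyOfFiniteType) f := by
      rw [← IsProper.eq_valuativeCriterion]; infer_instance
    exact h.1.1.1
  set ξ := genericPoint X with hξ
  let φ₀ : k →+* A :=
    RingHom.codRestrict (structureMapToFunctionField k X f).hom
      A.toSubring hk
  have w : X.fromSpecStalk ξ ≫ f =
      Spec.map (CommRingCat.ofHom (algebraMap A X.functionField)) ≫
        Spec.map (CommRingCat.ofHom φ₀) := by
    apply hom_ext_of_appTop
    rw [← Spec.map_comp]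
    have : CommRingCat.ofHom φ₀ ≫ CommRingCat.ofHom (algebraMap A X.functionField) =
        structureMapToFunctionField k X f := by
      ext a; rfl
    rw [this, ← cancel_mono (Scheme.ΓSpecIso X.functionField).hom,
      Scheme.ΓSpecIso_naturality, Scheme.Hom.comp_appTop, Scheme.fromSpecStalk_appTop]
    simp [structureMapToFunctionField]; rfl
  let S : ValuativeCommSq f :=
    { R := A
      K := X.functionField
      i₁ := X.fromSpecStalk ξ
      i₂ := Spec.map (CommRingCat.ofHom φ₀)
      commSq := ⟨w⟩ }
  obtain ⟨l₀, hl₁, hl₂⟩ := (hVC.existence S).exists_lift.some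
  dsimp only [S] at l₀ hl₁ hl₂
  let l : Spec (CommRingCat.of A) ⟶ X := l₀
  have hl₁ : Spec.map (CommRingCat.ofHom (algebraMap A X.functionField)) ≫ l =
      X.fromSpecStalk ξ := hl₁
  haveI : IsLocalRing ↥(CommRingCat.of A) := inferInstanceAs (IsLocalRing A)
  let x : X := l.base (IsLocalRing.closedPoint A)
  let ψ : X.presheaf.stalk x ⟶ CommRingCat.of A := Scheme.stalkClosedPointTo l
  have key : ψ ≫ CommRingCat.ofHom (algebraMap A X.functionField) =
      X.presheaf.stalkSpecializes ((genericPoint_spec X).specializes trivial) := by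
    apply Spec.map_injective
    rw [← cancel_mono (X.fromSpecStalk x)]
    have h1 : Spec.map ψ ≫ X.fromSpecStalk x = l :=
      Scheme.Spec_stalkClosedPointTo_fromSpecStalk l
    rw [Spec.map_comp, Category.assoc, h1, Scheme.SpecMap_stalkSpecializes_fromSpecStalk]
    exact hl₁
  haveI : IsLocalHom ψ.hom := Scheme.isLocalHom_stalkClosedPointTo l
  have hval : ∀ g : X.presheaf.stalk x,
      algebraMap (X.presheaf.stalk x) X.functionField g = (ψ g : X.functionField) := by
    intro g
    have := congrArg (fun (θ : X.presheaf.stalk x ⟶ X.functionField) => θ g) key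
    exact this.symm
  refine ⟨x, fun g => ?_, fun g hg => ?_⟩
  · rw [hval g]; exact (ψ g).2
  · have : (⟨algebraMap (X.presheaf.stalk x) X.functionField g, by rw [hval g]; exact (ψ g).2⟩ :
        A) = ψ g := Subtype.ext (hval g)
    rw [IsLocalRing.mem_maximalIdeal]
    intro hu
    exact hg (isUnit_of_map_unit ψ.hom g (by rwa [← this]))
end

section
/- Let k be a field and let f : X' → X be a proper dominant morphism of integral schemes of finite type over k, inducing an inclusion of function fields K = k(X) ⊆ K' = k(X'). Let B be a valuation subring of K' containing the image of k, and let A = B ∩ K be the induced valuation subring of K. If x ∈ X is a point such that A dominates O_{X,x}, then there exists a point x' ∈ X' with f(x') = x such that B dominates O_{X',x'}; in particular, the generic point of the center of B on X' maps under f to the generic point of the center of A on X. -/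
open AlgebraicGeometry CategoryTheory
open IsLocalRing

/-- The *center* of a valuation subring `A` of the function field of an integral scheme
`X`. -/
def valuationCenter (X : Scheme) [IsIntegral X]
    (A : ValuationSubring X.functionField) : Set X :=
  {x : X | ∀ g : X.presheaf.stalk x,
    algebraMap (X.presheaf.stalk x) X.functionField g ∈ A}

noncomputable section

lemma algMap_eq (X : Scheme) [IsIntegral X] (x : X) :
    (algebraMap (X.presheaf.stalk x) X.functionField : _ →+* _) =
      (X.presheaf.stalkSpecializes ((genericPoint_spec X).specializes trivial)).hom :=
  RingHom.algebraMap_toAlgebra _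

lemma spec_cancel {X : Scheme} (x : X) {F : CommRingCat}
    (a b : X.presheaf.stalk x ⟶ F)
    (h : Spec.map a ≫ X.fromSpecStalk x = Spec.map b ≫ X.fromSpecStalk x) : a = b :=
  Spec.map_injective ((cancel_mono _).mp h)

lemma vs_isUnit_iff {K : Type*} [Field K] (A : ValuationSubring K) (v : K) (hv : v ∈ A) :
    IsUnit (⟨v, hv⟩ : A) ↔ v ≠ 0 ∧ v⁻¹ ∈ A := by
  constructor
  · intro h
    obtain ⟨w, hw⟩ := h.exists_right_inv
    have hw' : v * (w : K) = 1 := congrArg Subtype.val hw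
    have hv0 : v ≠ 0 := by rintro rfl; rw [zero_mul] at hw'; exact one_ne_zero hw'.symm
    have hinv : v⁻¹ = (w : K) := eq_inv_of_mul_eq_one_right hw' |>.symm
    exact ⟨hv0, hinv ▸ w.2⟩
  · rintro ⟨h0, hinv⟩
    exact IsUnit.of_mul_eq_one ⟨v⁻¹, hinv⟩ (Subtype.ext (mul_inv_cancel₀ h0))

lemma vs_comap_max {K K' : Type*} [Field K] [Field K'] (i : K →+* K') (B : ValuationSubring K')
    (v : K) (hv : v ∈ B.comap i)
    (h : (⟨v, hv⟩ : B.comap i) ∈ maximalIdeal (B.comap i)) :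
    (⟨i v, hv⟩ : B) ∈ maximalIdeal B := by
  rw [mem_maximalIdeal, mem_nonunits_iff] at h ⊢
  intro hu
  obtain ⟨h0, hinv⟩ := (vs_isUnit_iff B (i v) hv).mp hu
  have hv0 : v ≠ 0 := by rintro rfl; rw [map_zero] at h0; exact h0 rfl
  have hm : v⁻¹ ∈ B.comap i := by
    show i v⁻¹ ∈ B
    rw [map_inv₀]; exact hinv
  exact h ((vs_isUnit_iff (B.comap i) v hv).mpr ⟨hv0, hm⟩)


/-- The corestriction of `𝒪_{X,x} → K(X)` to a valuation subring containing its image. -/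
def centerHom (X : Scheme) [IsIntegral X] (A : ValuationSubring X.functionField) (x : X)
    (hx : ∀ g : X.presheaf.stalk x, algebraMap (X.presheaf.stalk x) X.functionField g ∈ A) :
    X.presheaf.stalk x →+* A where
  toFun s := ⟨algebraMap (X.presheaf.stalk x) X.functionField s, hx s⟩
  map_one' := Subtype.ext (by simp)
  map_mul' a b := Subtype.ext (by simp)
  map_zero' := Subtype.ext (by simp)
  map_add' a b := Subtype.ext (by simp)

/-- The prime of `𝒪_{X,x}` pulled back from the maximal ideal of `A`. -/
def centerPrime (X : Scheme) [IsIntegral X] (A : ValuationSubring X.functionField) (x : X)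
    (hx : ∀ g : X.presheaf.stalk x, algebraMap (X.presheaf.stalk x) X.functionField g ∈ A) :
    PrimeSpectrum (X.presheaf.stalk x) :=
  ⟨(maximalIdeal A).comap (centerHom X A x hx), Ideal.IsPrime.comap _⟩

section rho
variable (X : Scheme) [IsIntegral X] (A : ValuationSubring X.functionField) (x : X)
  (hx : ∀ g : X.presheaf.stalk x, algebraMap (X.presheaf.stalk x) X.functionField g ∈ A)

lemma centerUnit (u : X.presheaf.stalk x) (hu : u ∉ (centerPrime X A x hx).asIdeal) :
    algebraMap (X.presheaf.stalk x) X.functionField u ≠ 0 ∧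
      (algebraMap (X.presheaf.stalk x) X.functionField u)⁻¹ ∈ A := by
  have h1 : IsUnit (centerHom X A x hx u) := by
    by_contra hcon
    exact hu ((mem_maximalIdeal _).mpr (mem_nonunits_iff.mpr hcon))
  exact (vs_isUnit_iff A _ (hx u)).mp h1

/-- The map from the localization of the stalk at the center prime into the function field. -/
def centerRho :
    (Spec (X.presheaf.stalk x)).presheaf.stalk (centerPrime X A x hx) →+* X.functionField :=
  letI : Algebra (X.presheaf.stalk x)
      ((Spec (X.presheaf.stalk x)).presheaf.stalk (centerPrime X A x hx)) :=
    (StructureSheaf.toStalk (X.presheaf.stalk x) (centerPrime X A x hx)).hom.toAlgebra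
  haveI : IsLocalization.AtPrime
      ((Spec (X.presheaf.stalk x)).presheaf.stalk (centerPrime X A x hx))
      (centerPrime X A x hx).asIdeal :=
    StructureSheaf.IsLocalization.to_stalk (X.presheaf.stalk x) (centerPrime X A x hx)
  IsLocalization.lift (M := (centerPrime X A x hx).asIdeal.primeCompl)
    (g := algebraMap (X.presheaf.stalk x) X.functionField)
    (fun u => isUnit_iff_ne_zero.mpr (centerUnit X A x hx u.1 u.2).1)

lemma centerRho_comp :
    (centerRho X A x hx).comp (StructureSheaf.toStalk (X.presheaf.stalk x)
        (centerPrime X A x hx)).hom = algebraMap (X.presheaf.stalk x) X.functionField := by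
  letI : Algebra (X.presheaf.stalk x)
      ((Spec (X.presheaf.stalk x)).presheaf.stalk (centerPrime X A x hx)) :=
    (StructureSheaf.toStalk (X.presheaf.stalk x) (centerPrime X A x hx)).hom.toAlgebra
  haveI : IsLocalization.AtPrime
      ((Spec (X.presheaf.stalk x)).presheaf.stalk (centerPrime X A x hx))
      (centerPrime X A x hx).asIdeal :=
    StructureSheaf.IsLocalization.to_stalk (X.presheaf.stalk x) (centerPrime X A x hx)
  show (centerRho X A x hx).comp (algebraMap (X.presheaf.stalk x)
      ((Spec (X.presheaf.stalk x)).presheaf.stalk (centerPrime X A x hx))) = _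
  exact IsLocalization.lift_comp _

lemma centerRho_mem (z : (Spec (X.presheaf.stalk x)).presheaf.stalk (centerPrime X A x hx)) :
    centerRho X A x hx z ∈ A := by
  letI : Algebra (X.presheaf.stalk x)
      ((Spec (X.presheaf.stalk x)).presheaf.stalk (centerPrime X A x hx)) :=
    (StructureSheaf.toStalk (X.presheaf.stalk x) (centerPrime X A x hx)).hom.toAlgebra
  haveI : IsLocalization.AtPrime
      ((Spec (X.presheaf.stalk x)).presheaf.stalk (centerPrime X A x hx))
      (centerPrime X A x hx).asIdeal :=
    StructureSheaf.IsLocalization.to_stalk (X.presheaf.stalk x) (centerPrime X A x hx)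
  obtain ⟨⟨s, u⟩, hz⟩ :=
    IsLocalization.mk'_surjective (centerPrime X A x hx).asIdeal.primeCompl z
  have hrel : z * (algebraMap (X.presheaf.stalk x)
      ((Spec (X.presheaf.stalk x)).presheaf.stalk (centerPrime X A x hx))) u.1 =
      algebraMap _ _ s := by
    rw [← hz]; exact IsLocalization.mk'_spec _ s u
  have happ := congrArg (centerRho X A x hx) hrel
  rw [map_mul] at happ
  have hlift : ∀ r : X.presheaf.stalk x,
      centerRho X A x hx (algebraMap _ _ r) = algebraMap _ X.functionField r := fun r =>
    IsLocalization.lift_eq _ r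
  rw [hlift, hlift] at happ
  obtain ⟨hne, hinv⟩ := centerUnit X A x hx u.1 u.2
  have : centerRho X A x hx z =
      algebraMap _ X.functionField s * (algebraMap _ X.functionField u.1)⁻¹ := by
    exact (eq_mul_inv_iff_mul_eq₀ hne).mpr happ
  rw [this]
  exact A.mul_mem _ _ (hx s) hinv

end rho

lemma centerRho_factor (X : Scheme) [IsIntegral X] (A : ValuationSubring X.functionField)
    (x : X)
    (hx : ∀ g : X.presheaf.stalk x, algebraMap (X.presheaf.stalk x) X.functionField g ∈ A) :
    CommRingCat.ofHom (algebraMap (X.presheaf.stalk ((X.fromSpecStalk x).base (centerPrime X A x hx)))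
        X.functionField : _ →+* _) =
      ((X.fromSpecStalk x).stalkMap (centerPrime X A x hx) ≫
        (CommRingCat.ofHom (centerRho X A x hx) : (Spec (X.presheaf.stalk x)).presheaf.stalk
          (centerPrime X A x hx) ⟶ X.functionField) :
        X.presheaf.stalk ((X.fromSpecStalk x).base (centerPrime X A x hx)) ⟶ _) := by
  apply spec_cancel
  erw [Spec.map_comp ((X.fromSpecStalk x).stalkMap (centerPrime X A x hx))
      (CommRingCat.ofHom (centerRho X A x hx)), Category.assoc,
    Scheme.SpecMap_stalkMap_fromSpecStalk (f := X.fromSpecStalk x) (x := centerPrime X A x hx),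
    Scheme.Spec_fromSpecStalk' (X.presheaf.stalk x) (centerPrime X A x hx)]
  have h1 : (StructureSheaf.toStalk (X.presheaf.stalk x) (centerPrime X A x hx) ≫
      (CommRingCat.ofHom (centerRho X A x hx) : _ ⟶ X.functionField)) =
      CommRingCat.ofHom (algebraMap (X.presheaf.stalk x) X.functionField : _ →+* _) :=
    CommRingCat.hom_ext (centerRho_comp X A x hx)
  have key : ∀ z : X, Spec.map (CommRingCat.ofHom (algebraMap (X.presheaf.stalk z)
      X.functionField)) ≫ X.fromSpecStalk z = X.fromSpecStalk (genericPoint X) := fun z => by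
    rw [algMap_eq, CommRingCat.ofHom_hom, Scheme.SpecMap_stalkSpecializes_fromSpecStalk]
  exact (key _).trans ((key x).symm.trans (by rw [← h1]; exact Spec.map_comp_assoc _ _ _))

lemma exists_generization (X : Scheme) [IsIntegral X]
    (A : ValuationSubring X.functionField) (x : X)
    (hx : ∀ g : X.presheaf.stalk x, algebraMap (X.presheaf.stalk x) X.functionField g ∈ A)
    (g₀ : X.presheaf.stalk x) (hg : ¬ IsUnit g₀)
    (hgu : IsUnit (⟨algebraMap (X.presheaf.stalk x) X.functionField g₀, hx g₀⟩ : A)) :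
    ∃ y : X, y ⤳ x ∧ y ≠ x ∧
      ∀ h : X.presheaf.stalk y, algebraMap (X.presheaf.stalk y) X.functionField h ∈ A := by
  refine ⟨(X.fromSpecStalk x).base (centerPrime X A x hx), ?_, ?_, ?_⟩
  · have : (X.fromSpecStalk x).base (centerPrime X A x hx) ∈
        Set.range (X.fromSpecStalk x).base := ⟨_, rfl⟩
    rwa [Scheme.range_fromSpecStalk] at this
  · intro hxy
    have hinj : Function.Injective (X.fromSpecStalk x).base :=
      (X.fromSpecStalk x).isEmbedding.injective
    have hp : centerPrime X A x hx = closedPoint (X.presheaf.stalk x) := by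
      apply hinj
      rw [hxy, Scheme.fromSpecStalk_closedPoint]
    have hgq : g₀ ∉ (centerPrime X A x hx).asIdeal := by
      intro hmem
      have h2 : centerHom X A x hx g₀ ∈ maximalIdeal A := hmem
      rw [mem_maximalIdeal, mem_nonunits_iff] at h2
      exact h2 hgu
    rw [hp] at hgq
    exact hgq ((mem_maximalIdeal g₀).mpr (mem_nonunits_iff.mpr hg))
  · intro h
    have he : algebraMap _ X.functionField h = _ :=
      DFunLike.congr_fun (congrArg CommRingCat.Hom.hom (centerRho_factor X A x hx)) h
    rw [he]
    exact centerRho_mem X A x hx ((X.fromSpecStalk x).stalkMap _ h)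


lemma dominates_of_closure_eq_center (X : Scheme) [IsIntegral X]
    (A : ValuationSubring X.functionField) (x : X)
    (hx : closure ({x} : Set X) = valuationCenter X A) : DominatesStalk X A x := by
  have hxc : ∀ g : X.presheaf.stalk x,
      algebraMap (X.presheaf.stalk x) X.functionField g ∈ A := by
    have : x ∈ valuationCenter X A := by rw [← hx]; exact subset_closure rfl
    exact this
  refine ⟨hxc, fun g hg => ?_⟩
  by_contra hng
  have hgu : IsUnit (⟨algebraMap _ _ g, hxc g⟩ : A) := by
    by_contra h2
    exact hng ((IsLocalRing.mem_maximalIdeal _).mpr (mem_nonunits_iff.mpr h2))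
  obtain ⟨y, hyx, hyne, hyA⟩ := exists_generization X A x hxc g hg hgu
  have hyc : y ∈ valuationCenter X A := hyA
  rw [← hx] at hyc
  have hxy : x ⤳ y := specializes_iff_mem_closure.mpr hyc
  exact hyne (hyx.antisymm hxy).eq

section part1

variable {X X' : Scheme} [IsIntegral X] [IsIntegral X']

/-- The local ring map `𝒪_{X,x} → B` induced by domination. -/
def domHom (f : X' ⟶ X) (i : X.functionField →+* X'.functionField)
    (B : ValuationSubring X'.functionField) (x : X)
    (hmem : ∀ g : X.presheaf.stalk x,
      algebraMap (X.presheaf.stalk x) X.functionField g ∈ B.comap i) :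
    X.presheaf.stalk x →+* B where
  toFun s := ⟨i (algebraMap (X.presheaf.stalk x) X.functionField s), hmem s⟩
  map_one' := Subtype.ext (by simp)
  map_mul' a b := Subtype.ext (by simp)
  map_zero' := Subtype.ext (by simp)
  map_add' a b := Subtype.ext (by simp)

set_option maxHeartbeats 1000000 in
lemma exists_dominating (f : X' ⟶ X) [UniversallyClosed f]
    (i : X.functionField →+* X'.functionField)
    (hi : ∀ (x' : X') (g : X.presheaf.stalk (f.base x')),
      i (algebraMap (X.presheaf.stalk (f.base x')) X.functionField g) =
        algebraMap (X'.presheaf.stalk x') X'.functionField (f.stalkMap x' g))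
    (B : ValuationSubring X'.functionField) (x : X)
    (hdom : DominatesStalk X (B.comap i) x) :
    ∃ x' : X', f.base x' = x ∧ DominatesStalk X' B x' := by
  haveI : IsLocalRing ↥(CommRingCat.of B) := inferInstanceAs (IsLocalRing B)
  obtain ⟨hmem, hmax⟩ := hdom
  haveI hloc : IsLocalHom (domHom f i B x hmem) := by
    constructor
    intro a ha
    by_contra hna
    have h2 := vs_comap_max i B _ _ (hmax a hna)
    rw [IsLocalRing.mem_maximalIdeal, mem_nonunits_iff] at h2
    exact h2 ha
  have e2 : (f.stalkMap (genericPoint X') :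
      X.presheaf.stalk (f.base (genericPoint X')) ⟶ X'.functionField) =
      (CommRingCat.ofHom (algebraMap (X.presheaf.stalk (f.base (genericPoint X'))) X.functionField : _ →+* _) ≫
        (CommRingCat.ofHom i : X.functionField ⟶ X'.functionField)) := by
    refine CommRingCat.hom_ext (RingHom.ext fun s => ?_)
    have h3 := hi (genericPoint X') s
    have hid : (@algebraMap _ _ _ _ (stalkFunctionFieldAlgebra X' (genericPoint X')) :
        X'.presheaf.stalk (genericPoint X') →+* X'.functionField) =
        RingHom.id _ :=
      ((RingHom.algebraMap_toAlgebra _).trans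
        (congrArg CommRingCat.Hom.hom
          (TopCat.Presheaf.stalkSpecializes_refl X'.presheaf (genericPoint X')))).trans
        CommRingCat.hom_id
    rw [hid] at h3
    exact h3.symm
  have hcomm : X'.fromSpecStalk (genericPoint X') ≫ f =
      Spec.map (CommRingCat.ofHom (algebraMap B X'.functionField)) ≫
        (Spec.map (CommRingCat.ofHom (domHom f i B x hmem) : X.presheaf.stalk x ⟶ CommRingCat.of B) ≫ X.fromSpecStalk x) := by
    have e1 : ((CommRingCat.ofHom (domHom f i B x hmem) : X.presheaf.stalk x ⟶ CommRingCat.of B) ≫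
        CommRingCat.ofHom (algebraMap B X'.functionField) :
          X.presheaf.stalk x ⟶ X'.functionField) =
        (CommRingCat.ofHom (algebraMap (X.presheaf.stalk x) X.functionField : _ →+* _) ≫
          (CommRingCat.ofHom i : X.functionField ⟶ X'.functionField)) :=
      CommRingCat.hom_ext (RingHom.ext fun s => rfl)
    have key : ∀ z : X, Spec.map (CommRingCat.ofHom (algebraMap (X.presheaf.stalk z)
        X.functionField)) ≫ X.fromSpecStalk z = X.fromSpecStalk (genericPoint X) := fun z => by
      rw [algMap_eq, CommRingCat.ofHom_hom, Scheme.SpecMap_stalkSpecializes_fromSpecStalk]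
    exact (Scheme.SpecMap_stalkMap_fromSpecStalk f (x := genericPoint X')).symm.trans
      ((congrArg (Spec.map · ≫ X.fromSpecStalk _) e2).trans
      ((Spec.map_comp_assoc _ _ _).trans
      ((congrArg (Spec.map (CommRingCat.ofHom i) ≫ ·) ((key _).trans (key x).symm)).trans
      ((Spec.map_comp_assoc _ _ _).symm.trans
      ((congrArg (Spec.map · ≫ X.fromSpecStalk x) e1.symm).trans (Spec.map_comp_assoc _ _ _))))))
  have hex : ValuativeCriterion.Existence f := by
    have h2 : (ValuativeCriterion.Existence ⊓ @QuasiCompact) f := by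
      rw [← UniversallyClosed.eq_valuativeCriterion]
      infer_instance
    exact h2.1
  have hlift : ∃ l : Spec (CommRingCat.of B) ⟶ X',
      Spec.map (CommRingCat.ofHom (algebraMap B X'.functionField)) ≫ l =
        X'.fromSpecStalk (genericPoint X') ∧
      l ≫ f = Spec.map (CommRingCat.ofHom (domHom f i B x hmem) : X.presheaf.stalk x ⟶ CommRingCat.of B) ≫ X.fromSpecStalk x := by
    obtain ⟨⟨l, h1, h2⟩⟩ := (hex
      { R := B
        K := X'.functionField
        i₁ := X'.fromSpecStalk (genericPoint X')
        i₂ := Spec.map (CommRingCat.ofHom (domHom f i B x hmem) : X.presheaf.stalk x ⟶ CommRingCat.of B) ≫ X.fromSpecStalk x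
        commSq := ⟨hcomm⟩ }).exists_lift
    exact ⟨l, h1, h2⟩
  obtain ⟨l, hl1, hl2⟩ := hlift
  refine ⟨l.base (IsLocalRing.closedPoint ↥(CommRingCat.of B)), ?_, ?_⟩
  · have hb := congrArg (fun m : Spec (CommRingCat.of B) ⟶ X =>
      m.base (IsLocalRing.closedPoint ↥(CommRingCat.of B))) hl2
    simp only [Scheme.Hom.comp_apply] at hb
    have hcp : (Spec.map (CommRingCat.ofHom (domHom f i B x hmem) : X.presheaf.stalk x ⟶ CommRingCat.of B)).base (IsLocalRing.closedPoint ↥(CommRingCat.of B)) =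
        IsLocalRing.closedPoint (X.presheaf.stalk x) := Spec_closedPoint (R := X.presheaf.stalk x)
    exact hb.trans ((congrArg (X.fromSpecStalk x).base hcp).trans Scheme.fromSpecStalk_closedPoint)
  · have hstep : Spec.map (Scheme.stalkClosedPointTo l) ≫
        X'.fromSpecStalk (l.base (IsLocalRing.closedPoint ↥(CommRingCat.of B))) = l :=
      Scheme.Spec_stalkClosedPointTo_fromSpecStalk (f := l)
    have hkey : CommRingCat.ofHom (algebraMap (X'.presheaf.stalk (l.base (IsLocalRing.closedPoint ↥(CommRingCat.of B))))
        X'.functionField : _ →+* _) =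
        ((Scheme.stalkClosedPointTo l :
            X'.presheaf.stalk (l.base (IsLocalRing.closedPoint ↥(CommRingCat.of B))) ⟶ CommRingCat.of B) ≫
          CommRingCat.ofHom (algebraMap B X'.functionField) : _ ⟶ _) := by
      apply spec_cancel
      rw [algMap_eq, CommRingCat.ofHom_hom, Scheme.SpecMap_stalkSpecializes_fromSpecStalk, Spec.map_comp,
        Category.assoc, hstep, hl1]
    have hBmem : ∀ g : X'.presheaf.stalk (l.base (IsLocalRing.closedPoint ↥(CommRingCat.of B))),
        algebraMap (X'.presheaf.stalk (l.base (IsLocalRing.closedPoint ↥(CommRingCat.of B))))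
          X'.functionField g ∈ B := by
      intro g
      have he : algebraMap _ X'.functionField g = _ :=
        DFunLike.congr_fun (congrArg CommRingCat.Hom.hom hkey) g
      rw [he]
      exact (Scheme.stalkClosedPointTo l g).2
    refine ⟨hBmem, fun g hg => ?_⟩
    have h5 : Scheme.stalkClosedPointTo l g ∈ IsLocalRing.maximalIdeal B := by
      rw [IsLocalRing.mem_maximalIdeal, mem_nonunits_iff]
      intro hu
      exact hg (IsLocalHom.map_nonunit g hu)
    have he : (⟨algebraMap (X'.presheaf.stalk (l.base (IsLocalRing.closedPoint ↥(CommRingCat.of B))))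
        X'.functionField g, hBmem g⟩ : B) = Scheme.stalkClosedPointTo l g :=
      Subtype.ext (DFunLike.congr_fun (congrArg CommRingCat.Hom.hom hkey) g)
    rw [he]
    exact h5

end part1

/-- Let `f : X' → X` be a proper dominant morphism of integral schemes of finite type
over a field `k`, inducing the inclusion `i : k(X) → k(X')` of function fields.  Let `B`
be a valuation subring of `k(X')` containing (the image of) `k`, and `A = B ∩ k(X)`
(i.e. `A = B.comap i`).  If `A` dominates `O_{X,x}`, then there is `x' ∈ X'` with
`f(x') = x` such that `B` dominates `O_{X',x'}`; in particular the generic point of the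
center of `B` on `X'` maps to the generic point of the center of `A` on `X`. -/
theorem center_maps_to_center_of_proper_dominant
    (k : Type*) [Field k] (X X' : Scheme) [IsIntegral X] [IsIntegral X']
    (pX : X ⟶ Spec (CommRingCat.of k)) (pX' : X' ⟶ Spec (CommRingCat.of k))
    [LocallyOfFiniteType pX] [QuasiCompact pX]
    [LocallyOfFiniteType pX'] [QuasiCompact pX']
    (f : X' ⟶ X) (hf : f ≫ pX = pX') [IsProper f] [IsDominant f]
    (i : X.functionField →+* X'.functionField)
    (hi : ∀ (x' : X') (g : X.presheaf.stalk (f.base x')),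
      i (algebraMap (X.presheaf.stalk (f.base x')) X.functionField g) =
        algebraMap (X'.presheaf.stalk x') X'.functionField (f.stalkMap x' g))
    (B : ValuationSubring X'.functionField)
    (hk : ∀ a : k, structureMapToFunctionField k X' pX' a ∈ B) :
    (∀ x : X, DominatesStalk X (B.comap i) x →
      ∃ x' : X', f.base x' = x ∧ DominatesStalk X' B x') ∧
    (∀ (x' : X') (x : X), closure ({x'} : Set X') = valuationCenter X' B →
      closure ({x} : Set X) = valuationCenter X (B.comap i) → f.base x' = x) := by
  have part1 : ∀ x : X, DominatesStalk X (B.comap i) x →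
      ∃ x' : X', f.base x' = x ∧ DominatesStalk X' B x' :=
    fun x hdom => exists_dominating f i hi B x hdom
  refine ⟨part1, ?_⟩
  intro x' x hcB hcA
  have hdomA : DominatesStalk X (B.comap i) x :=
    dominates_of_closure_eq_center X (B.comap i) x hcA
  obtain ⟨x'', hfx'', hdomB⟩ := part1 x hdomA
  obtain ⟨hmem'', -⟩ := hdomB
  have hx''c : x'' ∈ valuationCenter X' B := hmem''
  rw [← hcB] at hx''c
  have h1 : x' ⤳ x'' := specializes_iff_mem_closure.mpr hx''c
  have h2 : f.base x' ⤳ x := hfx'' ▸ h1.map f.base.hom.continuous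
  have hx'cB : x' ∈ valuationCenter X' B := by
    rw [← hcB]; exact subset_closure rfl
  have hfx'c : f.base x' ∈ valuationCenter X (B.comap i) := by
    intro g
    show i (algebraMap (X.presheaf.stalk (f.base x')) X.functionField g) ∈ B
    rw [hi x' g]
    exact hx'cB _
  rw [← hcA] at hfx'c
  have h3 : x ⤳ f.base x' := specializes_iff_mem_closure.mpr hfx'c
  exact (h2.antisymm h3).eq
end
end
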